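/- arXiv:2106.01219 — 6 statements merged into one kernel-verified Lean document; each statement's English description precedes it below -/
import Mathlib

section
/- Let V be a vector space with a non-degenerate quadratic form Q and polar form B, let W ≤ V be a subspace whose radical U = W ∩ W^⊥ is 2-dimensional and totally singular. Suppose u_1, u_2 is a basis of U, and t_1, t_2 are vectors not in W such that (u_1,t_1) and (u_2,t_2) are hyperbolic pairs with t_2 in ⟨u_1,t_1⟩^⊥. Then the linear map g defined by t_1 g = t_1 + u_2, t_2 g = t_2 − u_1, and wg = w for all w in W, is a nontrivial isometry of Q fixing W pointwise. -/
/-- Let `Q` be a non-degenerate quadratic form on a `d`-dimensional space `V`, and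
`W` a `(d-2)`-dimensional subspace whose radical `U = W ⊓ W^⊥` is 2-dimensional and
totally singular, with basis `u₁, u₂`. Suppose `t₁, t₂ ∉ W`, `(u₁,t₁)` and `(u₂,t₂)`
are hyperbolic pairs, and `t₂ ∈ ⟨u₁,t₁⟩^⊥` (and `u₂ ∈ ⟨u₁,t₁⟩^⊥`). Then the linear
map `g` with `g t₁ = t₁ + u₂`, `g t₂ = t₂ - u₁`, `g w = w` on `W` is a nontrivial
isometry of `Q` fixing `W` pointwise. -/
theorem stmt6 {F V : Type*} [Field F] [AddCommGroup V] [Module F V]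
    (d : ℕ) (hd : 4 ≤ d) (hdim : Module.finrank F V = d)
    (Q : QuadraticForm F V)
    (hnd : ∀ x : V, (∀ y : V, QuadraticMap.polar (⇑Q) x y = 0) → x = 0)
    (W : Submodule F V) (hWdim : Module.finrank F W = d - 2)
    (u₁ u₂ t₁ t₂ : V)
    (hrad : W ⊓ LinearMap.BilinForm.orthogonal (QuadraticMap.polarBilin Q) W = Submodule.span F {u₁, u₂})
    (hind : LinearIndependent F ![u₁, u₂])
    (hQu₁ : Q u₁ = 0) (hQu₂ : Q u₂ = 0)
    (hu₁u₂ : QuadraticMap.polar (⇑Q) u₁ u₂ = 0)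
    (ht₁ : t₁ ∉ W) (ht₂ : t₂ ∉ W)
    (hQt₁ : Q t₁ = 0) (hu₁t₁ : QuadraticMap.polar (⇑Q) u₁ t₁ = 1)
    (hQt₂ : Q t₂ = 0) (hu₂t₂ : QuadraticMap.polar (⇑Q) u₂ t₂ = 1)
    (ht₂u₁ : QuadraticMap.polar (⇑Q) t₂ u₁ = 0)
    (ht₂t₁ : QuadraticMap.polar (⇑Q) t₂ t₁ = 0)
    (hu₂t₁ : QuadraticMap.polar (⇑Q) u₂ t₁ = 0)
    (g : V →ₗ[F] V)
    (hg₁ : g t₁ = t₁ + u₂) (hg₂ : g t₂ = t₂ - u₁)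
    (hgW : ∀ w ∈ W, g w = w) :
    (∀ v : V, Q (g v) = Q v) ∧ g ≠ LinearMap.id := by
  classical
  have key : ∀ x y : V, Q (x + y) = Q x + Q y + QuadraticMap.polar (⇑Q) x y := by
    intro x y
    simp [QuadraticMap.polar]
  -- u₁, u₂ are in the radical
  have hu₁mem : u₁ ∈ W ⊓ LinearMap.BilinForm.orthogonal (QuadraticMap.polarBilin Q) W := by
    rw [hrad]; exact Submodule.subset_span (by simp)
  have hu₂mem : u₂ ∈ W ⊓ LinearMap.BilinForm.orthogonal (QuadraticMap.polarBilin Q) W := by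
    rw [hrad]; exact Submodule.subset_span (by simp)
  have hWu₁ : ∀ w ∈ W, QuadraticMap.polar (⇑Q) w u₁ = 0 := by
    intro w hw
    have := (LinearMap.BilinForm.mem_orthogonal_iff.mp hu₁mem.2) w hw
    simpa [LinearMap.BilinForm.IsOrtho] using this
  have hWu₂ : ∀ w ∈ W, QuadraticMap.polar (⇑Q) w u₂ = 0 := by
    intro w hw
    have := (LinearMap.BilinForm.mem_orthogonal_iff.mp hu₂mem.2) w hw
    simpa [LinearMap.BilinForm.IsOrtho] using this
  -- finite dimensionality
  have hfin : FiniteDimensional F V :=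
    Module.finite_of_finrank_pos (by rw [hdim]; omega)
  -- t₁, t₂ linearly independent
  have hu₁t₂ : QuadraticMap.polar (⇑Q) u₁ t₂ = 0 := by
    rw [QuadraticMap.polar_comm]; exact ht₂u₁
  have htind : LinearIndependent F ![t₁, t₂] := by
    rw [LinearIndependent.pair_iff]
    intro a b hab
    have h1 : QuadraticMap.polar (⇑Q) u₁ (a • t₁ + b • t₂) = a := by
      simp [QuadraticMap.polar_add_right, QuadraticMap.polar_smul_right,
        hu₁t₁, hu₁t₂, smul_eq_mul]
    have h2 : QuadraticMap.polar (⇑Q) u₂ (a • t₁ + b • t₂) = b := by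
      simp [QuadraticMap.polar_add_right, QuadraticMap.polar_smul_right,
        hu₂t₁, hu₂t₂, smul_eq_mul]
    rw [hab] at h1 h2
    simp [QuadraticMap.polar] at h1 h2
    exact ⟨h1.symm, h2.symm⟩
  -- W ⊔ span {t₁, t₂} = ⊤
  set T : Submodule F V := Submodule.span F {t₁, t₂} with hT
  have hinf : W ⊓ T = ⊥ := by
    rw [Submodule.eq_bot_iff]
    rintro x ⟨hxW, hxT⟩
    obtain ⟨a, b, hab⟩ := Submodule.mem_span_pair.mp hxT
    have h1 : QuadraticMap.polar (⇑Q) u₁ x = 0 := by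
      rw [QuadraticMap.polar_comm]; exact hWu₁ x hxW
    have h2 : QuadraticMap.polar (⇑Q) u₂ x = 0 := by
      rw [QuadraticMap.polar_comm]; exact hWu₂ x hxW
    rw [← hab] at h1 h2
    have ha : a = 0 := by
      simpa [QuadraticMap.polar_add_right, QuadraticMap.polar_smul_right,
        hu₁t₁, hu₁t₂, smul_eq_mul] using h1
    have hb : b = 0 := by
      simpa [QuadraticMap.polar_add_right, QuadraticMap.polar_smul_right,
        hu₂t₁, hu₂t₂, smul_eq_mul] using h2
    rw [← hab, ha, hb]; simp
  have hTrank : Module.finrank F T = 2 := by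
    have hrange : ({t₁, t₂} : Set V) = Set.range ![t₁, t₂] := by
      simp [Matrix.range_cons, Matrix.range_empty]
      exact Set.pair_comm t₁ t₂
    rw [hT, hrange, finrank_span_eq_card htind]
    simp
  have htop : W ⊔ T = ⊤ := by
    apply Submodule.eq_top_of_finrank_eq
    have := Submodule.finrank_sup_add_finrank_inf_eq W T
    rw [hinf, hWdim, hTrank] at this
    simp at this
    rw [hdim]
    omega
  -- main computation
  refine ⟨?_, ?_⟩
  · intro v
    have hv : v ∈ W ⊔ T := by rw [htop]; trivial
    obtain ⟨w, hw, z, hz, hwz⟩ := Submodule.mem_sup.mp hv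
    obtain ⟨a, b, hab⟩ := Submodule.mem_span_pair.mp hz
    have hveq : v = w + (a • t₁ + b • t₂) := by rw [hab, hwz]
    -- polar of v against u₁, u₂
    have hvu₁ : QuadraticMap.polar (⇑Q) v u₁ = a := by
      rw [hveq]
      rw [QuadraticMap.polar_add_left, QuadraticMap.polar_add_left,
        QuadraticMap.polar_smul_left, QuadraticMap.polar_smul_left,
        hWu₁ w hw]
      rw [QuadraticMap.polar_comm (⇑Q) t₁ u₁, QuadraticMap.polar_comm (⇑Q) t₂ u₁]
      rw [hu₁t₁, hu₁t₂]
      simp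
    have hvu₂ : QuadraticMap.polar (⇑Q) v u₂ = b := by
      rw [hveq]
      rw [QuadraticMap.polar_add_left, QuadraticMap.polar_add_left,
        QuadraticMap.polar_smul_left, QuadraticMap.polar_smul_left,
        hWu₂ w hw]
      rw [QuadraticMap.polar_comm (⇑Q) t₁ u₂, QuadraticMap.polar_comm (⇑Q) t₂ u₂]
      rw [hu₂t₁, hu₂t₂]
      simp
    -- g v = v + (a • u₂ + (-b) • u₁)
    have hgv : g v = v + (a • u₂ + (-b) • u₁) := by
      rw [hveq]
      rw [map_add, map_add, map_smul, map_smul, hg₁, hg₂, hgW w hw]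
      module
    rw [hgv, key]
    have hQe : Q (a • u₂ + (-b) • u₁) = 0 := by
      rw [key, QuadraticMap.map_smul, QuadraticMap.map_smul,
        QuadraticMap.polar_smul_left, QuadraticMap.polar_smul_right,
        QuadraticMap.polar_comm (⇑Q) u₂ u₁, hu₁u₂, hQu₁, hQu₂]
      simp
    have hpe : QuadraticMap.polar (⇑Q) v (a • u₂ + (-b) • u₁) = 0 := by
      rw [QuadraticMap.polar_add_right, QuadraticMap.polar_smul_right,
        QuadraticMap.polar_smul_right, hvu₁, hvu₂, smul_eq_mul, smul_eq_mul]
      ring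
    rw [hQe, hpe]
    ring
  · intro h
    have : t₁ + u₂ = t₁ := by rw [← hg₁, h]; rfl
    have hu₂0 : u₂ = 0 := by
      have := congrArg (fun x => x - t₁) this
      simpa using this
    have := hind.ne_zero 1
    simp [hu₂0] at this
end

section
/- Let d ≥ 6 be even and let G be the full projective orthogonal group PGO^±_d(q) acting on an orbit of 1-dimensional subspaces of its natural module V = F_q^d. Then any set of d−2 one-dimensional subspaces of V has nontrivial pointwise stabilizer in G; consequently the minimal base size of this action is at least d−1. -/
/-!
Let `B` be the polar form of `Q`. The pointwise stabilizer of `d - 2` lines contains the pointwise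
stabilizer of the subspace `W` they span, and `W^⊥` has dimension at least `2`. If `Q` does not
vanish on `W^⊥`, the reflection `x ↦ x - B(v, x) Q(v)⁻¹ v` in a non-singular `v ∈ W^⊥` (a
transvection in characteristic `2`) fixes `W` pointwise. Otherwise `W^⊥` is totally singular and
contains independent `u, v`, and the Eichler transformation `x ↦ x + B(v, x) u - B(u, x) v` fixes
`W` pointwise. Either isometry fixes a nonzero vector but is not the identity, so it is not a
scalar.
-/

open Module QuadraticMap

theorem not_exists_forall_eq_smul_of_apply_eq_of_apply_ne {R M : Type*} [Ring R] [IsDomain R]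
    [AddCommGroup M] [Module R M] [IsTorsionFree R M] {f : M → M} {w y : M} (hw : w ≠ 0)
    (hfw : f w = w) (hfy : f y ≠ y) : ¬ ∃ c : R, ∀ x, f x = c • x := by
  rintro ⟨c, hc⟩
  have hc1 : c = 1 := smul_left_injective R hw (by simp only [← hc, hfw, one_smul])
  exact hfy (by rw [hc, hc1, one_smul])

namespace Submodule

variable {K V : Type*} [DivisionRing K] [AddCommGroup V] [Module K V]

theorem map_eq_self_of_forall_apply_eq {g : V →ₗ[K] V} {L : Submodule K V}
    (h : ∀ x ∈ L, g x = x) : L.map g = L := by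
  ext x
  refine ⟨?_, fun hx => ⟨x, hx, h x hx⟩⟩
  rintro ⟨y, hy, rfl⟩
  rwa [h y hy]

theorem finrank_finset_sup_le_sum [FiniteDimensional K V] {ι : Type*}
    (s : Finset ι) (f : ι → Submodule K V) :
    finrank K ↥(s.sup f) ≤ ∑ i ∈ s, finrank K (f i) := by
  classical
  induction s using Finset.induction_on with
  | empty => simp
  | insert i s hi ih =>
    rw [Finset.sup_insert, Finset.sum_insert hi]
    exact (finrank_add_le_finrank_add_finrank _ _).trans (by omega)

theorem exists_mem_notMem_span_singleton {U : Submodule K V} (hU : 1 < finrank K U)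
    (u : V) : ∃ v ∈ U, v ∉ K ∙ u := by
  by_contra! h
  have : finrank K U ≤ 1 :=
    (finrank_mono h).trans ((finrank_span_le_card ({u} : Set V)).trans (by simp))
  omega

end Submodule

namespace QuadraticMap

variable {F V : Type*} [Field F] [AddCommGroup V] [Module F V] (Q : QuadraticForm F V)

theorem inv_smul_polarBilin_self {v : V} (hv : Q v ≠ 0) :
    ((Q v)⁻¹ • polarBilin Q v) v = 2 := by
  rw [LinearMap.smul_apply, polarBilin_apply_apply, polar_self, smul_eq_mul, nsmul_eq_mul,
    Nat.cast_ofNat, mul_comm 2, inv_mul_cancel_left₀ hv]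

section Reflection

variable {Q} {v : V} (hv : Q v ≠ 0)

theorem map_reflection_inv_smul_polarBilin (x : V) :
    Q (Module.reflection (Q.inv_smul_polarBilin_self hv) x) = Q x := by
  rw [Module.reflection_apply, sub_eq_add_neg, ← neg_smul, QuadraticMap.map_add (⇑Q),
    QuadraticMap.map_smul, polar_smul_right, LinearMap.smul_apply, polarBilin_apply_apply,
    polar_comm Q x v, smul_eq_mul, smul_eq_mul, smul_eq_mul]
  field_simp
  ring

theorem reflection_inv_smul_polarBilin_apply_of_polar_eq_zero {x : V} (hx : polar Q v x = 0) :
    Module.reflection (Q.inv_smul_polarBilin_self hv) x = x := by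
  simp [Module.reflection_apply, hx]

theorem not_exists_reflection_inv_smul_polarBilin_eq_smul (hQ : (polarBilin Q).SeparatingLeft)
    (hV : 2 ≤ finrank F V) [FiniteDimensional F V] :
    ¬ ∃ c : F, ∀ x, Module.reflection (Q.inv_smul_polarBilin_self hv) x = c • x := by
  have hv0 : v ≠ 0 := fun h => hv (by simp [h])
  obtain ⟨w, hw, hw0⟩ := Submodule.exists_mem_ne_zero_of_ne_bot
    (LinearMap.ker_ne_bot_of_finrank_lt (f := polarBilin Q v) (by rw [finrank_self]; omega))
  obtain ⟨y, hy⟩ : ∃ y, polar Q v y ≠ 0 := by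
    by_contra! h
    exact hv0 (hQ v h)
  refine not_exists_forall_eq_smul_of_apply_eq_of_apply_ne hw0
    (reflection_inv_smul_polarBilin_apply_of_polar_eq_zero hv hw) (y := y) ?_
  simp [Module.reflection_apply, hv, hy, hv0]

end Reflection

section Eichler

def eichlerTransformation (u v : V) : V →ₗ[F] V :=
  LinearMap.id + (polarBilin Q v).smulRight u - (polarBilin Q u).smulRight v

theorem eichlerTransformation_apply (u v x : V) :
    Q.eichlerTransformation u v x = x + polar Q v x • u - polar Q u x • v :=
  rfl

variable {Q} {u v : V}

theorem eichlerTransformation_apply_of_polar_eq_zero {x : V} (hux : polar Q u x = 0)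
    (hvx : polar Q v x = 0) : Q.eichlerTransformation u v x = x := by
  simp [eichlerTransformation_apply, hux, hvx]

theorem eichlerTransformation_comp_swap (hu : Q u = 0) (hv : Q v = 0) (huv : polar Q u v = 0) :
    Q.eichlerTransformation u v ∘ₗ Q.eichlerTransformation v u = LinearMap.id := by
  have hvu : polar Q v u = 0 := by rw [polar_comm, huv]
  ext x
  simp only [LinearMap.comp_apply, LinearMap.id_apply, eichlerTransformation_apply,
    polar_add_right, polar_sub_right, polar_smul_right, polar_self, hu, hv, huv, hvu,
    smul_zero, smul_eq_mul, mul_zero, add_zero, sub_zero]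
  module

theorem map_eichlerTransformation (hu : Q u = 0) (hv : Q v = 0) (huv : polar Q u v = 0)
    (x : V) : Q (Q.eichlerTransformation u v x) = Q x := by
  rw [eichlerTransformation_apply, sub_eq_add_neg, ← neg_smul, QuadraticMap.map_add (⇑Q),
    QuadraticMap.map_add (⇑Q) x, QuadraticMap.map_smul, QuadraticMap.map_smul, polar_add_left,
    polar_smul_left, polar_smul_right, polar_smul_right, polar_smul_right, polar_comm Q x v,
    polar_comm Q x u, huv, hu, hv]
  simp only [smul_eq_mul]
  ring

theorem not_exists_eichlerTransformation_eq_smul (hQ : (polarBilin Q).SeparatingLeft)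
    (hu : Q u = 0) (hvu : polar Q v u = 0) (hu0 : u ≠ 0) (hv : v ∉ F ∙ u) :
    ¬ ∃ c : F, ∀ x, Q.eichlerTransformation u v x = c • x := by
  obtain ⟨y, hy⟩ : ∃ y, polar Q u y ≠ 0 := by
    by_contra! h
    exact hu0 (hQ u h)
  refine not_exists_forall_eq_smul_of_apply_eq_of_apply_ne hu0
    (eichlerTransformation_apply_of_polar_eq_zero (by simp [polar_self, hu]) hvu) (y := y) ?_
  intro hfix
  rw [eichlerTransformation_apply, add_sub_assoc, add_eq_left, sub_eq_zero] at hfix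
  refine hv (Submodule.mem_span_singleton.mpr ⟨(polar Q u y)⁻¹ * polar Q v y, ?_⟩)
  rw [mul_smul, hfix, inv_smul_smul₀ hy]

end Eichler

theorem exists_isometry_forall_mem_apply_eq_not_scalar [FiniteDimensional F V]
    (hQ : (polarBilin Q).SeparatingLeft) (W : Submodule F V)
    (hW : finrank F W + 2 ≤ finrank F V) :
    ∃ g : V ≃ₗ[F] V, (∀ x, Q (g x) = Q x) ∧ (∀ x ∈ W, g x = x) ∧
      ¬ ∃ c : F, ∀ x, g x = c • x := by
  have hWU := LinearMap.BilinForm.finrank_add_finrank_orthogonal' (B := polarBilin Q) W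
  set U := LinearMap.BilinForm.orthogonal (polarBilin Q) W
  have hU : 2 ≤ finrank F U := by omega
  have hUW : ∀ u ∈ U, ∀ x ∈ W, polar Q u x = 0 := fun u hu x hx => by
    rw [polar_comm]
    exact hu x hx
  by_cases hQU : ∃ v ∈ U, Q v ≠ 0
  · obtain ⟨v, hvU, hv⟩ := hQU
    exact ⟨Module.reflection (Q.inv_smul_polarBilin_self hv),
      map_reflection_inv_smul_polarBilin hv,
      fun x hx => reflection_inv_smul_polarBilin_apply_of_polar_eq_zero hv (hUW v hvU x hx),
      not_exists_reflection_inv_smul_polarBilin_eq_smul hv hQ (hU.trans U.finrank_le)⟩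
  push Not at hQU
  obtain ⟨u, huU, hu0⟩ := Submodule.exists_mem_ne_zero_of_ne_bot
    (Submodule.one_le_finrank_iff.mp (by omega) : U ≠ ⊥)
  obtain ⟨v, hvU, hvu⟩ :=
    Submodule.exists_mem_notMem_span_singleton (by omega : 1 < finrank F U) u
  have huv : polar Q u v = 0 := by
    simp [polar, hQU u huU, hQU v hvU, hQU (u + v) (U.add_mem huU hvU)]
  have hvu' : polar Q v u = 0 := by rw [polar_comm, huv]
  exact ⟨LinearEquiv.ofLinearMap _ _
      (eichlerTransformation_comp_swap (hQU u huU) (hQU v hvU) huv)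
      (eichlerTransformation_comp_swap (hQU v hvU) (hQU u huU) hvu'),
    map_eichlerTransformation (hQU u huU) (hQU v hvU) huv,
    fun x hx => eichlerTransformation_apply_of_polar_eq_zero (hUW u huU x hx) (hUW v hvU x hx),
    not_exists_eichlerTransformation_eq_smul hQ (hQU u huU) hvu' hu0 hvu⟩

theorem exists_isometry_forall_mem_map_eq_not_scalar [FiniteDimensional F V]
    (hQ : (polarBilin Q).SeparatingLeft) (A : Finset (Submodule F V))
    (hA : ∀ L ∈ A, finrank F L = 1) (hcard : A.card + 2 ≤ finrank F V) :
    ∃ g : V ≃ₗ[F] V, (∀ x, Q (g x) = Q x) ∧ (∀ L ∈ A, L.map g.toLinearMap = L) ∧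
      ¬ ∃ c : F, ∀ x, g x = c • x := by
  have hspan : finrank F ↥(A.sup id) ≤ A.card := by
    simpa [Finset.sum_congr rfl hA] using Submodule.finrank_finset_sup_le_sum A id
  obtain ⟨g, hQg, hgW, hg⟩ :=
    Q.exists_isometry_forall_mem_apply_eq_not_scalar hQ (A.sup id) (by omega)
  exact ⟨g, hQg, fun L hL => Submodule.map_eq_self_of_forall_apply_eq fun x hx =>
    hgW x (Finset.le_sup (f := id) hL hx), hg⟩

end QuadraticMap

theorem stmt7_general {F V : Type*} [Field F] [AddCommGroup V] [Module F V]
    (d : ℕ) (hd : 6 ≤ d) (hdim : Module.finrank F V = d)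
    (Q : QuadraticForm F V)
    (hnd : ∀ x : V, (∀ y : V, QuadraticMap.polar (⇑Q) x y = 0) → x = 0) :
    (∀ A : Finset (Submodule F V), A.card = d - 2 →
      (∀ L ∈ A, Module.finrank F L = 1) →
      ∃ g : V ≃ₗ[F] V, (∀ x, Q (g x) = Q x) ∧
        (∀ L ∈ A, Submodule.map g.toLinearMap L = L) ∧
        ¬ ∃ c : F, ∀ x : V, g x = c • x) ∧
    (∀ B : Finset (Submodule F V), (∀ L ∈ B, Module.finrank F L = 1) →
      (∀ g : V ≃ₗ[F] V, (∀ x, Q (g x) = Q x) →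
        (∀ L ∈ B, Submodule.map g.toLinearMap L = L) →
        ∃ c : F, ∀ x : V, g x = c • x) →
      d - 1 ≤ B.card) := by
  have : FiniteDimensional F V := .of_finrank_pos (by omega)
  refine ⟨fun A hA hlines => Q.exists_isometry_forall_mem_map_eq_not_scalar hnd A hlines
    (by omega), fun B hlines hbase => ?_⟩
  by_contra! hB
  obtain ⟨g, hQg, hgB, hg⟩ :=
    Q.exists_isometry_forall_mem_map_eq_not_scalar hnd B hlines (by omega)
  exact hg (hbase g hQg hgB)

/-- Let `d ≥ 6` be even and `Q` a non-degenerate quadratic form on a `d`-dimensional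
space `V` over a finite field. Any set of `d - 2` one-dimensional subspaces of `V`
has nontrivial pointwise stabilizer in the projective orthogonal group `PGO`
(i.e. some isometry stabilizing all the lines is non-scalar); consequently any base
for the action of `PGO` on a set of `1`-spaces has size at least `d - 1`. -/
theorem stmt7 {F V : Type*} [Field F] [Fintype F] [AddCommGroup V] [Module F V]
    (d : ℕ) (hd : 6 ≤ d) (hde : Even d) (hdim : Module.finrank F V = d)
    (Q : QuadraticForm F V)
    (hnd : ∀ x : V, (∀ y : V, QuadraticMap.polar (⇑Q) x y = 0) → x = 0) :
    (∀ A : Finset (Submodule F V), A.card = d - 2 →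
      (∀ L ∈ A, Module.finrank F L = 1) →
      ∃ g : V ≃ₗ[F] V, (∀ x, Q (g x) = Q x) ∧
        (∀ L ∈ A, Submodule.map g.toLinearMap L = L) ∧
        ¬ ∃ c : F, ∀ x : V, g x = c • x) ∧
    (∀ B : Finset (Submodule F V), (∀ L ∈ B, Module.finrank F L = 1) →
      (∀ g : V ≃ₗ[F] V, (∀ x, Q (g x) = Q x) →
        (∀ L ∈ B, Submodule.map g.toLinearMap L = L) →
        ∃ c : F, ∀ x : V, g x = c • x) →
      d - 1 ≤ B.card) :=
  stmt7_general d hd hdim Q hnd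
end

section
/- For even q = 2^f and d = 2m ≥ 6, the base size of G = Sp_d(q) acting on the right coset space of M = GO^±_d(q) equals d. -/
/-!
In characteristic `2`, for a symplectic `g` the form `Q ∘ g - Q` has zero polarization, so over a
perfect field it is the square of a linear form `B(w, -)`. Hence every point of the orbit of `Q` is
some `Q_w = Q + B(w, -)²`, and an isometry `g` of `Q_{w₀}` fixes `Q_w` iff it fixes `w - w₀`.

Lower bound: given fewer than `d` points `Q_{w₀}, …, Q_{w_k}` of the orbit, the differences
`w_i - w₀` span a subspace `W` of codimension at least `2`. If `Q_{w₀}` does not vanish on `W^⊥`,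
an orthogonal transvection along a vector of `W^⊥` is a nontrivial isometry of `Q_{w₀}` fixing
`W`; otherwise `W^⊥` contains two independent orthogonal singular vectors, and a Siegel
transformation does the same.

Upper bound: choose a singular `v ≠ 0` whose hyperplane `v^⊥` contains a hyperbolic pair. Then
`v^⊥` has a basis `w₁, …, w_{d-1}` of singular vectors, each `Q_{w_i}` is the image of `Q` under
the transvection along `w_i`, and an isometry fixing `Q` and all `Q_{w_i}` fixes `v^⊥` pointwise;
it is then a transvection along the singular vector `v`, hence trivial.
-/

open Module QuadraticMap

namespace SymplecticBase

variable {F V : Type*} [Field F] [AddCommGroup V] [Module F V]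
  {Q : QuadraticForm F V} {B : LinearMap.BilinForm F V}

lemma apply_add_eq (hQ : polarBilin Q = B) (x y : V) : Q (x + y) = Q x + Q y + B x y := by
  rw [← hQ, polarBilin_apply_apply, polar]
  ring

lemma bilin_comm (hQ : polarBilin Q = B) (x y : V) : B x y = B y x := by
  simp only [← hQ, polarBilin_apply_apply, polar_comm]

lemma isRefl (hQ : polarBilin Q = B) : B.IsRefl := fun x y h => bilin_comm hQ x y ▸ h

lemma isOrthogonal_of_comp_eq (hQ : polarBilin Q = B) {g : V →ₗ[F] V}
    (hg : polarBilin (Q.comp g) = B) : B.IsOrthogonal g := fun x y => by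
  simpa [polarBilin_comp, hQ] using congr($hg x y)

lemma mem_orthogonal_span_singleton_iff {v x : V} : x ∈ B.orthogonal (F ∙ v) ↔ B v x = 0 :=
  ⟨fun h => h v (Submodule.mem_span_singleton_self v), fun h n hn => by
    obtain ⟨a, rfl⟩ := Submodule.mem_span_singleton.mp hn
    simp [h]⟩

lemma exists_mem_notMem_span_singleton {W : Submodule F V} [FiniteDimensional F W]
    (hW : 1 < finrank F W) (x : V) : ∃ z ∈ W, z ∉ F ∙ x := by
  by_contra! h
  have := Submodule.finrank_mono (R := F) h
  have := finrank_span_le_card (R := F) ({x} : Set V)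
  simp only [Set.toFinset_singleton, Finset.card_singleton] at this
  omega

lemma eq_refl_of_fixes_orthogonal [FiniteDimensional F V] (hQ : polarBilin Q = B)
    (hB : B.Nondegenerate) {v : V} (hv : v ≠ 0) (hQv : Q v = 0) {g : V ≃ₗ[F] V}
    (hgQ : Q.comp g.toLinearMap = Q) (hfix : ∀ x ∈ B.orthogonal (F ∙ v), g x = x) :
    g = LinearEquiv.refl F V := by
  have hg : B.IsOrthogonal g := isOrthogonal_of_comp_eq hQ (by rw [hgQ, hQ])
  obtain ⟨u, hu⟩ : ∃ u, B v u = 1 := by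
    obtain ⟨u, hu⟩ : ∃ u, B v u ≠ 0 := by
      by_contra! h
      exact hv (hB.1 v h)
    exact ⟨(B v u)⁻¹ • u, by simp [hu]⟩
  have hmem (y : V) : y - B v y • u ∈ B.orthogonal (F ∙ v) :=
    mem_orthogonal_span_singleton_iff.mpr (by simp [hu])
  -- `g` fixes the hyperplane `v^⊥`, so it moves `u` along `(v^⊥)^⊥ = F v`
  obtain ⟨c, hc⟩ : ∃ c : F, c • v = g u - u := by
    rw [← Submodule.mem_span_singleton,
      ← LinearMap.BilinForm.orthogonal_orthogonal hB (isRefl hQ) (F ∙ v)]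
    intro x hx
    rw [map_sub, ← hg x u, hfix x hx, sub_self]
  have hgu : g u = u + c • v := by rw [hc, add_sub_cancel]
  have hc0 : c = 0 := by
    have := congr($hgQ u)
    rwa [comp_apply, LinearEquiv.coe_coe, hgu, apply_add_eq hQ, QuadraticMap.map_smul, hQv,
      smul_zero, add_zero, map_smul, bilin_comm hQ, hu, smul_eq_mul, mul_one, add_eq_left] at this
  ext y
  have := hfix _ (hmem y)
  rwa [map_sub, map_smul, hgu, hc0, zero_smul, add_zero, sub_left_inj] at this

def sqForm (B : LinearMap.BilinForm F V) (w : V) : QuadraticForm F V :=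
  QuadraticMap.sq.comp (B w)

@[simp]
lemma sqForm_apply (w x : V) : sqForm B w x = B w x ^ 2 := by
  simp [sqForm, pow_two]

lemma sqForm_zero : sqForm B 0 = 0 := by
  ext x
  simp

lemma add_sqForm_comp {g : V ≃ₗ[F] V} (hg : B.IsOrthogonal g) (w : V) :
    (Q + sqForm B w).comp g.toLinearMap = Q.comp g.toLinearMap + sqForm B (g.symm w) := by
  ext x
  simp only [QuadraticMap.comp_apply, add_apply, sqForm_apply,
    LinearEquiv.coe_coe]
  rw [← hg (g.symm w) x, LinearEquiv.apply_symm_apply]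

lemma comp_transvection (hQ : polarBilin Q = B) {v : V} (c : F)
    (h : (c • B v) v = 0) :
    Q.comp (LinearEquiv.transvection h).toLinearMap = Q + (c ^ 2 * Q v + c) • sqForm B v := by
  ext x
  simp only [QuadraticMap.comp_apply, LinearEquiv.coe_coe, LinearEquiv.transvection.apply,
    apply_add_eq hQ, QuadraticMap.map_smul, map_smul, add_apply, smul_apply,
    sqForm_apply, LinearMap.smul_apply, smul_eq_mul, bilin_comm hQ x v]
  ring

def IsBase (B : LinearMap.BilinForm F V) (Q : QuadraticForm F V)
    (s : Finset (QuadraticForm F V)) : Prop :=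
  (∀ Q' ∈ s, ∃ g : V ≃ₗ[F] V, B.IsOrthogonal g ∧ Q' = Q.comp g.toLinearMap) ∧
    ∀ g : V ≃ₗ[F] V, B.IsOrthogonal g → (∀ Q' ∈ s, Q'.comp g.toLinearMap = Q') →
      g = LinearEquiv.refl F V

section CharTwo

variable [CharP F 2]

lemma bilin_self (hQ : polarBilin Q = B) (x : V) : B x x = 0 := by
  rw [← hQ, polarBilin_apply_apply, polar_self, two_nsmul, CharTwo.add_self_eq_zero]

lemma sqForm_add (w w' : V) : sqForm B (w + w') = sqForm B w + sqForm B w' := by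
  ext x
  simp [CharTwo.add_sq]

lemma polarBilin_add_sqForm (hQ : polarBilin Q = B) (w : V) :
    polarBilin (Q + sqForm B w) = B := by
  ext x y
  simp only [polarBilin_apply_apply, polar, add_apply, sqForm_apply, map_add, apply_add_eq hQ]
  linear_combination (B w x * B w y) * CharTwo.two_eq_zero (R := F)

lemma sqForm_injective (hB : B.Nondegenerate) : Function.Injective (sqForm B) := by
  intro w w' h
  refine sub_eq_zero.mp (hB.1 _ fun x => ?_)
  have hx : B w x ^ 2 = B w' x ^ 2 := by simpa using congr($h x)
  rw [map_sub, LinearMap.sub_apply, sub_eq_zero]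
  exact frobenius_inj F 2 hx

lemma exists_ne_refl_fixing_of_anisotropic (hQ : polarBilin Q = B) (hB : B.Nondegenerate)
    {W : Submodule F V} {x : V} (hxW : x ∈ B.orthogonal W) (hx : Q x ≠ 0) :
    ∃ g : V ≃ₗ[F] V, g ≠ LinearEquiv.refl F V ∧ Q.comp g.toLinearMap = Q ∧ ∀ w ∈ W, g w = w := by
  have hxx : ((Q x)⁻¹ • B x) x = 0 := by simp [bilin_self hQ]
  refine ⟨LinearEquiv.transvection hxx, fun hg => ?_, ?_, fun w hw => ?_⟩
  · obtain ⟨y, hy⟩ : ∃ y, B x y ≠ 0 := by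
      by_contra! h
      exact hx (by rw [hB.1 x h, QuadraticMap.map_zero])
    have hx0 : x ≠ 0 := by rintro rfl; exact hx (QuadraticMap.map_zero Q)
    have := congr($hg y)
    rw [LinearEquiv.transvection.apply, LinearEquiv.refl_apply, add_eq_left] at this
    simp [hx, hy, hx0] at this
  · rw [comp_transvection hQ, pow_two, inv_mul_cancel_right₀ hx, CharTwo.add_self_eq_zero,
      zero_smul, add_zero]
  · rw [LinearEquiv.transvection.apply, LinearMap.smul_apply, bilin_comm hQ x w, hxW w hw,
      smul_zero, zero_smul, add_zero]

lemma exists_ne_refl_fixing_of_totallySingular (hQ : polarBilin Q = B) (hB : B.Nondegenerate)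
    {W : Submodule F V} {v₁ v₂ : V} (h₁ : v₁ ∈ B.orthogonal W) (h₂ : v₂ ∈ B.orthogonal W)
    (hind : LinearIndependent F ![v₁, v₂]) (hQ₁ : Q v₁ = 0) (hQ₂ : Q v₂ = 0)
    (h₁₂ : B v₁ v₂ = 0) :
    ∃ g : V ≃ₗ[F] V, g ≠ LinearEquiv.refl F V ∧ Q.comp g.toLinearMap = Q ∧ ∀ w ∈ W, g w = w := by
  have h₂₁ : B v₂ v₁ = 0 := by rw [bilin_comm hQ, h₁₂]
  -- a Siegel transformation
  set g := (LinearEquiv.transvection (f := B v₁) h₁₂).trans (LinearEquiv.transvection h₂₁)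
  have hg (y : V) : g y = y + (B v₁ y • v₂ + B v₂ y • v₁) := by
    simp only [g, LinearEquiv.trans_apply, LinearEquiv.transvection.apply, map_add, map_smul,
      bilin_self hQ, zero_smul, add_zero]
    abel
  refine ⟨g, fun h => ?_, ext fun y => ?_, fun w hw => ?_⟩
  · obtain ⟨y, hy⟩ : ∃ y, B v₁ y ≠ 0 := by
      by_contra! h
      exact hind.ne_zero 0 (hB.1 v₁ h)
    have := congr($h y)
    rw [hg, LinearEquiv.refl_apply, add_eq_left, add_comm] at this
    exact hy (LinearIndependent.pair_iff.mp hind _ _ this).2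
  · rw [comp_apply, LinearEquiv.coe_coe, hg, apply_add_eq hQ, apply_add_eq hQ,
      QuadraticMap.map_smul, QuadraticMap.map_smul, hQ₁, hQ₂]
    simp only [map_add, map_smul, LinearMap.add_apply, LinearMap.smul_apply, smul_eq_mul, h₂₁,
      bilin_comm hQ y]
    linear_combination (B v₁ y * B v₂ y) * CharTwo.two_eq_zero (R := F)
  · rw [hg, bilin_comm hQ v₁, bilin_comm hQ v₂, h₁ w hw, h₂ w hw, zero_smul, zero_smul,
      add_zero, add_zero]

lemma exists_ne_refl_fixing [FiniteDimensional F V] (hQ : polarBilin Q = B)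
    (hB : B.Nondegenerate) (W : Submodule F V) (hW : finrank F W + 2 ≤ finrank F V) :
    ∃ g : V ≃ₗ[F] V, g ≠ LinearEquiv.refl F V ∧ Q.comp g.toLinearMap = Q ∧ ∀ w ∈ W, g w = w := by
  by_cases h : ∃ x ∈ B.orthogonal W, Q x ≠ 0
  · obtain ⟨x, hxW, hx⟩ := h
    exact exists_ne_refl_fixing_of_anisotropic hQ hB hxW hx
  push Not at h
  have hrank : 1 < finrank F (B.orthogonal W) := by
    rw [LinearMap.BilinForm.finrank_orthogonal hB]
    omega
  obtain ⟨v₁, hv₁, hv₁0⟩ := exists_mem_notMem_span_singleton hrank 0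
  obtain ⟨v₂, hv₂, hv₂1⟩ := exists_mem_notMem_span_singleton hrank v₁
  have hind : LinearIndependent F ![v₂, v₁] := by
    refine linearIndependent_fin2.mpr ⟨fun h0 => hv₁0 ?_, fun a ha => hv₂1 ?_⟩
    · simpa using h0
    · exact Submodule.mem_span_singleton.mpr ⟨a, ha⟩
  have h₂₁ : B v₂ v₁ = 0 := by
    have := apply_add_eq hQ v₂ v₁
    rwa [h _ (add_mem hv₂ hv₁), h _ hv₂, h _ hv₁, zero_add, zero_add, eq_comm] at this
  exact exists_ne_refl_fixing_of_totallySingular hQ hB hv₂ hv₁ hind (h _ hv₂) (h _ hv₁) h₂₁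

lemma span_singular_eq {H : Submodule F V} {e f : V} (hQ : polarBilin Q = B) (he : e ∈ H)
    (hf : f ∈ H) (hQe : Q e = 0) (hQf : Q f = 0) (hef : B e f = 1) :
    Submodule.span F {x | x ∈ H ∧ Q x = 0} = H := by
  refine le_antisymm (Submodule.span_le.mpr fun x hx => hx.1) fun h hh => ?_
  have mem (x : V) (hx : x ∈ H) (hQx : Q x = 0) : x ∈ Submodule.span F {x | x ∈ H ∧ Q x = 0} :=
    Submodule.subset_span ⟨hx, hQx⟩
  set β := B h e + 1
  set α := Q h + β * B h f
  have hs : Q (h + α • e + β • f) = 0 := by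
    simp only [apply_add_eq hQ, QuadraticMap.map_smul, hQe, hQf, map_add, map_smul,
      LinearMap.add_apply, LinearMap.smul_apply, smul_eq_mul, hef]
    linear_combination (Q h + β * B h f + α * B h e) * CharTwo.two_eq_zero (R := F)
  have hsum : h = (h + α • e + β • f) + α • e + β • f :=
    calc h = h + (α + α) • e + (β + β) • f := by simp [CharTwo.add_self_eq_zero]
      _ = _ := by module
  rw [hsum]
  exact add_mem (add_mem (mem _ (add_mem (add_mem hh (H.smul_mem α he)) (H.smul_mem β hf)) hs)
    (Submodule.smul_mem _ α (mem e he hQe))) (Submodule.smul_mem _ β (mem f hf hQf))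

open Classical in
lemma isBase_image_insert_zero [FiniteDimensional F V] (hQ : polarBilin Q = B)
    (hB : B.Nondegenerate) {S : Finset V} (hS : ∀ w ∈ S, Q w = 0) {v : V} (hv : v ≠ 0)
    (hQv : Q v = 0)
    (hspan : B.orthogonal (F ∙ v) ≤ Submodule.span F S) :
    IsBase B Q ((insert 0 S).image fun w => Q + sqForm B w) := by
  refine ⟨fun Q' hQ' => ?_, fun g hg hfix => ?_⟩
  · obtain ⟨w, hw, rfl⟩ := Finset.mem_image.mp hQ'
    have hQw : Q w = 0 := (Finset.mem_insert.mp hw).elim (· ▸ QuadraticMap.map_zero Q) (hS w)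
    have hww : ((1 : F) • B w) w = 0 := by simp [bilin_self hQ]
    have hcomp := comp_transvection hQ 1 hww
    rw [hQw, mul_zero, zero_add, one_smul F (sqForm B w)] at hcomp
    exact ⟨_, isOrthogonal_of_comp_eq hQ (by rw [hcomp, polarBilin_add_sqForm hQ]), hcomp.symm⟩
  have hfix' (w : V) (hw : w ∈ insert 0 S) :
      (Q + sqForm B w).comp g.toLinearMap = Q + sqForm B w :=
    hfix _ (Finset.mem_image_of_mem _ hw)
  have hgQ : Q.comp g.toLinearMap = Q := by
    simpa [sqForm_zero] using hfix' 0 (Finset.mem_insert_self _ _)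
  have hgS : Set.EqOn g.toLinearMap (LinearMap.id (R := F)) S := fun w hw => by
    have := hfix' w (Finset.mem_insert_of_mem hw)
    rw [add_sqForm_comp hg, hgQ, add_right_inj] at this
    exact (g.symm_apply_eq.mp (sqForm_injective hB this)).symm
  exact eq_refl_of_fixes_orthogonal hQ hB hv hQv hgQ fun x hx => LinearMap.eqOn_span hgS (hspan hx)

section Perfect

variable [PerfectRing F 2]

lemma exists_eq_sq_of_polar_eq_zero (P : QuadraticForm F V) (hP : ∀ x y, polar P x y = 0) :
    ∃ L : Dual F V, ∀ x, P x = L x ^ 2 := by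
  have hadd (x y : V) : P (x + y) = P x + P y := by
    simpa [polar, sub_sub, sub_eq_zero] using hP x y
  let L : Dual F V :=
    { toFun x := (frobeniusEquiv F 2).symm (P x)
      map_add' x y := by simp [hadd]
      map_smul' c x := by
        rw [QuadraticMap.map_smul, smul_eq_mul, map_mul, ← pow_two, ← frobenius_def,
          frobeniusEquiv_symm_apply_frobenius]
        rfl }
  exact ⟨L, fun x => (frobeniusEquiv_symm_pow_p F 2 _).symm⟩

lemma exists_comp_eq_add_sqForm [FiniteDimensional F V] (hQ : polarBilin Q = B)
    (hB : B.Nondegenerate) {g : V →ₗ[F] V} (hg : B.IsOrthogonal g) :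
    ∃ w, Q.comp g = Q + sqForm B w := by
  obtain ⟨L, hL⟩ := exists_eq_sq_of_polar_eq_zero (Q.comp g - Q) fun x y => by
    have h : polar Q (g x) (g y) = polar Q x y := by
      simpa only [← polarBilin_apply_apply, hQ] using hg x y
    simp only [polar, sub_apply, comp_apply, map_add] at h ⊢
    linear_combination h
  refine ⟨(B.toDual hB).symm L, ext fun x => ?_⟩
  rw [add_apply, sqForm_apply, LinearMap.BilinForm.apply_toDual_symm_apply, ← hL, sub_apply]
  ring

lemma exists_singular_mem_orthogonal [FiniteDimensional F V]
    (hQ : polarBilin Q = B) (hB : B.Nondegenerate) (S : Submodule F V)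
    (hS : finrank F S + 3 ≤ finrank F V) : ∃ v ∈ B.orthogonal S, v ≠ 0 ∧ Q v = 0 := by
  have hrank (T : Submodule F V) : finrank F (B.orthogonal T) = finrank F V - finrank F T :=
    LinearMap.BilinForm.finrank_orthogonal hB T
  obtain ⟨x, hxS, hx0⟩ := exists_mem_notMem_span_singleton (W := B.orthogonal S)
    (by rw [hrank]; omega) 0
  replace hx0 : x ≠ 0 := by simpa using hx0
  by_cases hx : Q x = 0
  · exact ⟨x, hxS, hx0, hx⟩
  have hsup := Submodule.finrank_add_le_finrank_add_finrank S (F ∙ x)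
  have hx1 := finrank_span_singleton (K := F) hx0
  obtain ⟨z, hz, hzx⟩ := exists_mem_notMem_span_singleton
    (W := B.orthogonal (S ⊔ F ∙ x)) (by rw [hrank]; omega) x
  have hzS : z ∈ B.orthogonal S := LinearMap.BilinForm.orthogonal_le le_sup_left hz
  have hxz : B x z = 0 :=
    LinearMap.BilinForm.orthogonal_le le_sup_right hz x (Submodule.mem_span_singleton_self x)
  -- in characteristic `2`, `Q (z + t x) = Q z + t² Q x` has the root `t = √(Q z / Q x)`
  set t := (frobeniusEquiv F 2).symm (Q z / Q x)
  refine ⟨z + t • x, add_mem hzS (Submodule.smul_mem _ t hxS), fun h => hzx ?_, ?_⟩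
  · exact Submodule.mem_span_singleton.mpr
      ⟨-t, by rw [neg_smul, neg_eq_iff_add_eq_zero, add_comm, h]⟩
  · rw [apply_add_eq hQ, QuadraticMap.map_smul, map_smul, bilin_comm hQ, hxz, smul_zero,
      add_zero, smul_eq_mul, ← pow_two, frobeniusEquiv_symm_pow_p, div_mul_cancel₀ _ hx,
      CharTwo.add_self_eq_zero]

lemma exists_hyperbolic_pair [FiniteDimensional F V] (hQ : polarBilin Q = B)
    (hB : B.Nondegenerate) (hV : 3 ≤ finrank F V) :
    ∃ e f : V, Q e = 0 ∧ Q f = 0 ∧ B e f = 1 := by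
  obtain ⟨e, -, he0, hQe⟩ := exists_singular_mem_orthogonal hQ hB ⊥ (by simpa using hV)
  obtain ⟨f₀, hf₀⟩ : ∃ f₀, B e f₀ ≠ 0 := by
    by_contra! h
    exact he0 (hB.1 e h)
  obtain ⟨f₁, hef₁⟩ : ∃ f₁, B e f₁ = 1 := ⟨(B e f₀)⁻¹ • f₀, by simp [hf₀]⟩
  refine ⟨e, f₁ + Q f₁ • e, hQe, ?_, ?_⟩
  · rw [apply_add_eq hQ, QuadraticMap.map_smul, hQe, map_smul, bilin_comm hQ, hef₁]
    simp [CharTwo.add_self_eq_zero]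
  · simp [hef₁, bilin_self hQ]

lemma exists_isBase_card_eq [FiniteDimensional F V] (hQ : polarBilin Q = B)
    (hB : B.Nondegenerate) (hV : 5 ≤ finrank F V) : ∃ s, s.card = finrank F V ∧ IsBase B Q s := by
  classical
  obtain ⟨e, f, hQe, hQf, hef⟩ := exists_hyperbolic_pair hQ hB (by omega)
  have hef_rank := finrank_span_le_card (R := F) ({e, f} : Set V)
  have : ({e, f} : Set V).toFinset.card ≤ 2 := by
    simpa using Finset.card_insert_le e {f}
  obtain ⟨v, hv, hv0, hQv⟩ :=
    exists_singular_mem_orthogonal hQ hB (Submodule.span F {e, f}) (by omega)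
  have hmem (x : V) (hx : x ∈ ({e, f} : Set V)) : x ∈ B.orthogonal (F ∙ v) := by
    rw [mem_orthogonal_span_singleton_iff, bilin_comm hQ]
    exact hv x (Submodule.subset_span hx)
  have hH := span_singular_eq hQ (hmem e (by simp)) (hmem f (by simp)) hQe hQf hef
  obtain ⟨b, hbsub, hbspan, hbind⟩ := exists_linearIndependent F
    {x | x ∈ B.orthogonal (F ∙ v) ∧ Q x = 0}
  set S := hbind.setFinite.toFinset
  have hSb : (S : Set V) = b := hbind.setFinite.coe_toFinset
  have hSspan : Submodule.span F (S : Set V) = B.orthogonal (F ∙ v) := by rw [hSb, hbspan, hH]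
  have hScard : S.card + 1 = finrank F V := by
    have h := finrank_span_finset_eq_card (R := F) (s := S) (hSb ▸ hbind)
    rw [hSspan, LinearMap.BilinForm.finrank_orthogonal hB, finrank_span_singleton hv0] at h
    omega
  have hS0 : (0 : V) ∉ S := fun h => hbind.ne_zero ⟨0, hSb ▸ h⟩ rfl
  refine ⟨_, ?_, isBase_image_insert_zero hQ hB (fun w hw => (hbsub (hSb ▸ hw)).2) hv0 hQv
    hSspan.ge⟩
  rw [Finset.card_image_of_injective _ fun w w' h => sqForm_injective hB (add_left_cancel h),
    Finset.card_insert_of_notMem hS0, hScard]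

lemma finrank_le_card_of_isBase [FiniteDimensional F V] (hQ : polarBilin Q = B)
    (hB : B.Nondegenerate) (hV : 2 ≤ finrank F V) {s : Finset (QuadraticForm F V)}
    (hs : IsBase B Q s) :
    finrank F V ≤ s.card := by
  by_contra! hlt
  rcases s.eq_empty_or_nonempty with rfl | ⟨Q₀, hQ₀⟩
  · obtain ⟨g, hg1, hgQ, -⟩ := exists_ne_refl_fixing hQ hB ⊥ (by simpa using hV)
    exact hg1 (hs.2 g (isOrthogonal_of_comp_eq hQ (by rw [hgQ, hQ])) (by simp))
  have hrep (Q' : s) : ∃ u, (Q' : QuadraticForm F V) = Q + sqForm B u := by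
    obtain ⟨g, hg, hQ'⟩ := hs.1 Q' Q'.2
    obtain ⟨u, hu⟩ := exists_comp_eq_add_sqForm hQ hB (g := g.toLinearMap) hg
    exact ⟨u, hQ'.trans hu⟩
  choose u hu using hrep
  set u₀ := u ⟨Q₀, hQ₀⟩
  have hQ₀B := polarBilin_add_sqForm hQ u₀
  have hW : finrank F (vectorSpan F (Set.range u)) + 2 ≤ finrank F V := by
    have := Finset.card_pos.mpr ⟨Q₀, hQ₀⟩
    have := finrank_vectorSpan_range_le F u (n := s.card - 1) (by simp; omega)
    omega
  obtain ⟨g, hg1, hgQ, hgW⟩ := exists_ne_refl_fixing hQ₀B hB _ hW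
  have hg : B.IsOrthogonal g := isOrthogonal_of_comp_eq hQ₀B (by rw [hgQ, hQ₀B])
  refine hg1 (hs.2 g hg fun Q' hQ' => ?_)
  have hdiff : u ⟨Q', hQ'⟩ - u₀ ∈ vectorSpan F (Set.range u) :=
    vsub_mem_vectorSpan F (Set.mem_range_self _) (Set.mem_range_self _)
  have hsplit : Q' = Q + sqForm B u₀ + sqForm B (u ⟨Q', hQ'⟩ - u₀) := by
    rw [add_assoc, ← sqForm_add, add_sub_cancel, ← hu]
  rw [hsplit, add_sqForm_comp hg, hgQ, g.symm_apply_eq.mpr (hgW _ hdiff).symm]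

end Perfect

end CharTwo

end SymplecticBase

/-- The coset space `GO(Q) \ Sp(B)` is modelled by the `Sp(B)`-orbit of `Q`, the coset of `g`
being the form `Q ∘ g`. -/
theorem stmt8_general {F V : Type*} [Field F] [Fintype F] [AddCommGroup V] [Module F V]
    (f q d : ℕ) (hq : Fintype.card F = q) (hqf : q = 2 ^ f)
    (hd6 : 6 ≤ d) (hdim : Module.finrank F V = d)
    (B : LinearMap.BilinForm F V)
    (hndB : ∀ x : V, (∀ y : V, B x y = 0) → x = 0)
    (Q : QuadraticForm F V) (hpol : QuadraticMap.polarBilin Q = B) :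
    IsLeast {n : ℕ | ∃ s : Finset (QuadraticForm F V), s.card = n ∧
      (∀ Q' ∈ s, ∃ g : V ≃ₗ[F] V,
        (∀ x y : V, B (g x) (g y) = B x y) ∧ Q' = Q.comp g.toLinearMap) ∧
      (∀ g : V ≃ₗ[F] V, (∀ x y : V, B (g x) (g y) = B x y) →
        (∀ Q' ∈ s, Q'.comp g.toLinearMap = Q') → g = LinearEquiv.refl F V)} d := by
  have : CharP F 2 := charP_of_card_eq_prime_pow (hq.trans hqf)
  have : FiniteDimensional F V := Module.finite_of_finrank_pos (by omega)
  have hB : B.Nondegenerate :=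
    (SymplecticBase.isRefl hpol).nondegenerate_iff_separatingLeft.mpr hndB
  subst hdim
  exact ⟨SymplecticBase.exists_isBase_card_eq hpol hB (by omega), fun n ⟨s, hs, hbase⟩ =>
    hs ▸ SymplecticBase.finrank_le_card_of_isBase hpol hB (by omega) hbase⟩

/-- For `q = 2^f` even and `d = 2m ≥ 6`, the base size of `Sp_d(q)` acting on the
coset space of `GO^±_d(q)` equals `d`. The coset space `GO^ε_d(q) \ Sp_d(q)` is
identified, as an `Sp_d(q)`-set, with the orbit of the quadratic form `Q`
(whose polar form is the symplectic form `B`) under the symplectic group: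
cosets correspond to the forms `Q ∘ g` for `g ∈ Sp_d(q)`. A base is a finite set
of points of this orbit with trivial pointwise stabilizer, and `d` is the least
size of a base. -/
theorem stmt8 {F V : Type*} [Field F] [Fintype F] [AddCommGroup V] [Module F V]
    (f q d m : ℕ) (hq : Fintype.card F = q) (hqf : q = 2 ^ f) (hf : 1 ≤ f)
    (hd : d = 2 * m) (hd6 : 6 ≤ d) (hdim : Module.finrank F V = d)
    (B : LinearMap.BilinForm F V) (halt : ∀ x : V, B x x = 0)
    (hndB : ∀ x : V, (∀ y : V, B x y = 0) → x = 0)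
    (Q : QuadraticForm F V) (hpol : QuadraticMap.polarBilin Q = B) :
    IsLeast {n : ℕ | ∃ s : Finset (QuadraticForm F V), s.card = n ∧
      (∀ Q' ∈ s, ∃ g : V ≃ₗ[F] V,
        (∀ x y : V, B (g x) (g y) = B x y) ∧ Q' = Q.comp g.toLinearMap) ∧
      (∀ g : V ≃ₗ[F] V, (∀ x y : V, B (g x) (g y) = B x y) →
        (∀ Q' ∈ s, Q'.comp g.toLinearMap = Q') → g = LinearEquiv.refl F V)} d :=
  stmt8_general f q d hq hqf hd6 hdim B hndB Q hpol
end

section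
/- Let s ≥ 2, t ≥ 2 with ℓ = st ≥ 5, let G = Sym(ℓ) act on the set Ω of partitions of {1,...,ℓ} into s blocks of size t, and let n = |Ω| = ℓ!/((t!)^s · s!). Then the minimal base size b(G,Ω) satisfies b(G,Ω) < log₂ n + 1. -/
/-!
Cut the cycle `Fin ℓ`, `ℓ = s t`, into `s` arcs of length `t`, and rotate the cut by each
`c < t`. A permutation fixing these `t` partitions fixes, for every pair of points, the set of
shifts `c` that separate them. Consecutive points are separated by exactly one shift and any
other two distinct points by at least two, so the permutation is an automorphism of the
`ℓ`-cycle, `x ↦ a ± x`. Arc boundaries go to arc boundaries, which forces `t ∣ a` for a rotation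
and excludes reflections when `t ≥ 3`. Now exchange `0` and `t + 1` in the unrotated partition:
`0` is the only multiple `x` of `t` whose new block meets its arc in `{x}` alone, so `a = 0`.
For `t = 2` a second exchange, of `0` and `5`, is needed as well. The base thus has `t + 1`
elements (`4` if `t = 2`), while `n = ∏_{i<s} C(it + t - 1, t - 1) ≥ C(2t - 1, t - 1) > 2 ^ t`
(`n ≥ 15` if `t = 2`).
-/

namespace ArcPartitionBase

open Finset Equiv Fin.NatCast Fin.CommRing

section FiberPartition

variable {α β : Type*}

def PreservesFibers (g : α → α) (f : α → β) : Prop :=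
  ∀ x y, f (g x) = f (g y) ↔ f x = f y

/-- `{x}` is a block of the common refinement of the partitions into the fibres of `f` and of
`f'`. -/
def IsMeetSingleton (f f' : α → β) (x : α) : Prop :=
  ∀ y, f y = f x → f' y = f' x → y = x

theorem PreservesFibers.isMeetSingleton {g : α → α} {f f' : α → β} (hf : PreservesFibers g f)
    (hf' : PreservesFibers g f') (hg : Function.Surjective g) {x : α}
    (hx : IsMeetSingleton f f' x) : IsMeetSingleton f f' (g x) := by
  intro y hy hy'
  obtain ⟨z, rfl⟩ := hg y
  rw [hx z ((hf z x).1 hy) ((hf' z x).1 hy')]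

variable [DecidableEq α]

theorem isMeetSingleton_swap {f : α → β} {p q : α} (hpq : f p ≠ f q) :
    IsMeetSingleton f (f ∘ swap p q) p := by
  intro y hy hy'
  by_contra hyp
  by_cases hyq : y = q
  · exact hpq (hyq ▸ hy).symm
  · simp only [Function.comp, swap_apply_left, swap_apply_of_ne_of_ne hyp hyq] at hy'
    exact hpq (hy.symm.trans hy')

theorem isMeetSingleton_swap_right {f : α → β} {p q : α} (hpq : f p ≠ f q) :
    IsMeetSingleton f (f ∘ swap p q) q := by
  rw [swap_comm]
  exact isMeetSingleton_swap hpq.symm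

theorem eq_or_eq_of_isMeetSingleton_swap {f : α → β} {p q x y : α}
    (hx : IsMeetSingleton f (f ∘ swap p q) x) (hxp : x ≠ p) (hxq : x ≠ q) (hy : f y = f x) :
    y = x ∨ y = p ∨ y = q := by
  by_contra! hne
  refine hne.1 (hx y hy ?_)
  simp only [Function.comp, swap_apply_of_ne_of_ne hxp hxq, swap_apply_of_ne_of_ne hne.2.1 hne.2.2,
    hy]

variable [Fintype α] [DecidableEq β]

theorem apply_eq_or_apply_eq_of_isMeetSingleton_swap {f : α → β} {p q x : α}
    (h2 : 2 ≤ (univ.filter fun y => f y = f x).card) (hx : IsMeetSingleton f (f ∘ swap p q) x) :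
    x = p ∨ x = q ∨ f x = f p ∨ f x = f q := by
  by_contra! hne
  obtain ⟨y, hy, hyx⟩ := exists_mem_ne h2 x
  rw [mem_filter] at hy
  rcases eq_or_eq_of_isMeetSingleton_swap hx hne.1 hne.2.1 hy.2 with rfl | rfl | rfl
  · exact hyx rfl
  · exact hne.2.2.1 hy.2.symm
  · exact hne.2.2.2 hy.2.symm

theorem eq_or_eq_of_isMeetSingleton_swap_of_three_le {f : α → β} {p q x : α} (hpq : f p ≠ f q)
    (h3 : 3 ≤ (univ.filter fun y => f y = f x).card) (hx : IsMeetSingleton f (f ∘ swap p q) x) :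
    x = p ∨ x = q := by
  by_contra! hne
  obtain ⟨r, hr, hrx⟩ : ∃ r ∈ ({p, q} : Finset α), f r ≠ f x := by
    by_cases hp : f p = f x
    · exact ⟨q, by simp, fun hq => hpq (hp.trans hq.symm)⟩
    · exact ⟨p, by simp, hp⟩
  have hsub : (univ.filter fun y => f y = f x) ⊆ (({x, p, q} : Finset α)).erase r := by
    intro y hy
    rw [mem_filter] at hy
    refine mem_erase.2 ⟨fun hyr => hrx (hyr ▸ hy.2), ?_⟩
    rcases eq_or_eq_of_isMeetSingleton_swap hx hne.1 hne.2 hy.2 with rfl | rfl | rfl <;> simp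
  have := (card_le_card hsub).trans_lt' (by omega : 2 < _)
  rw [card_erase_of_mem (mem_insert_of_mem hr)] at this
  have := card_le_three (a := x) (b := p) (c := q)
  omega

def fiberPartition (f : α → β) : Finset (Finset α) :=
  univ.image fun x => univ.filter fun y => f y = f x

theorem existsUnique_mem_fiberPartition (f : α → β) (x : α) :
    ∃! b, b ∈ fiberPartition f ∧ x ∈ b := by
  refine ⟨univ.filter fun y => f y = f x, ⟨mem_image_of_mem _ (mem_univ x), by simp⟩, ?_⟩
  rintro b ⟨hb, hxb⟩
  obtain ⟨z, -, rfl⟩ := mem_image.1 hb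
  rw [mem_filter] at hxb
  simp only [hxb.2]

theorem card_fiberPartition (f : α → β) :
    (fiberPartition f).card = (univ.image f).card := by
  have : fiberPartition f = (univ.image f).image fun b => univ.filter fun y => f y = b := by
    rw [image_image]; rfl
  rw [this, card_image_of_injOn]
  intro b hb b' _ hbb'
  obtain ⟨x, -, rfl⟩ := mem_image.1 hb
  have : x ∈ univ.filter fun y => f y = b' := by
    simp only at hbb'
    rw [← hbb']; simp
  exact (mem_filter.1 this).2

theorem preservesFibers_of_image_fiberPartition {g : α → α} (hg : Function.Injective g)
    {f : α → β} (h : (fiberPartition f).image (fun b => b.image g) = fiberPartition f) :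
    PreservesFibers g f := by
  intro x y
  have hx : (univ.filter fun y => f y = f x).image g ∈ fiberPartition f :=
    h ▸ mem_image_of_mem _ (mem_image_of_mem _ (mem_univ x))
  obtain ⟨z, -, hz⟩ := mem_image.1 hx
  have key : ∀ y, f (g y) = f z ↔ f y = f x := fun y => by
    simpa [hg.mem_finset_image] using congrArg (g y ∈ ·) hz
  have hgx : f (g x) = f z := (key x).2 rfl
  rw [hgx, eq_comm, key y, eq_comm]

end FiberPartition

section NatArith

variable {ℓ t : ℕ}

theorem mod_div_eq_div_mod (htℓ : t ∣ ℓ) (m : ℕ) : m % ℓ / t = m / t % (ℓ / t) := by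
  conv_lhs => rw [← Nat.mul_div_cancel' htℓ]
  exact Nat.mod_mul_right_div_self m t (ℓ / t)

theorem mod_ne_mod_of_lt_of_lt {p q s : ℕ} (hpq : p < q) (hqp : q < p + s) : p % s ≠ q % s := by
  intro h
  have := Nat.le_of_dvd (by omega) (Nat.dvd_of_mod_eq_zero (Nat.sub_mod_eq_zero_of_mod_eq h.symm))
  omega

theorem exists_lt_dvd_add (ht : 0 < t) (m : ℕ) : ∃ c < t, t ∣ m + c := by
  have hm := Nat.div_add_mod m t
  have hr := Nat.mod_lt m ht
  by_cases h0 : m % t = 0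
  · exact ⟨0, ht, ⟨m / t, by omega⟩⟩
  · exact ⟨t - m % t, by omega, ⟨m / t + 1, by rw [Nat.mul_add_one]; omega⟩⟩

theorem eq_of_dvd_add_of_dvd_add {m c c' : ℕ} (hc : c < t) (hc' : c' < t) (h : t ∣ m + c)
    (h' : t ∣ m + c') : c = c' := by
  have := Nat.ModEq.add_left_cancel' m
    ((Nat.modEq_zero_iff_dvd.2 h).trans (Nat.modEq_zero_iff_dvd.2 h').symm)
  rwa [Nat.ModEq, Nat.mod_eq_of_lt hc, Nat.mod_eq_of_lt hc'] at this

theorem div_ne_of_dvd_between (ht : 0 < t) (htℓ : t ∣ ℓ) {a b c k : ℕ} (hk : 0 < k)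
    (hab : a + k ≤ b) (hba : b + t ≤ a + ℓ) (hdvd : t ∣ a + k + c) :
    (a + c) % ℓ / t ≠ (b + c) % ℓ / t := by
  rw [mod_div_eq_div_mod htℓ, mod_div_eq_div_mod htℓ]
  have hℓ : ℓ / t * t = ℓ := Nat.div_mul_cancel htℓ
  have hs : 1 ≤ ℓ / t := (Nat.le_div_iff_mul_le ht).2 (by omega)
  have hshift : (b + c) / t ≤ (a + c) / t + (ℓ / t - 1) := by
    rw [← Nat.add_mul_div_right _ _ ht]
    exact Nat.div_le_div_right (by rw [Nat.sub_one_mul]; omega)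
  refine mod_ne_mod_of_lt_of_lt ?_ (by omega)
  exact (Nat.div_lt_div_of_lt_of_dvd hdvd (by omega)).trans_le (Nat.div_le_div_right (by omega))

theorem one_lt_card_filter_div_ne (ht : 2 ≤ t) (htℓ : t ∣ ℓ) {a b : ℕ} (hab : a + 2 ≤ b)
    (hba : b + t ≤ a + ℓ) :
    1 < ((range t).filter fun c => (a + c) % ℓ / t ≠ (b + c) % ℓ / t).card := by
  obtain ⟨c₁, hc₁, h₁⟩ := exists_lt_dvd_add (t := t) (by omega) (a + 1)
  obtain ⟨c₂, hc₂, h₂⟩ := exists_lt_dvd_add (t := t) (by omega) (a + 2)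
  refine one_lt_card.2 ⟨c₁, ?_, c₂, ?_, ?_⟩
  · exact mem_filter.2 ⟨mem_range.2 hc₁, div_ne_of_dvd_between (by omega) htℓ one_pos
      (by omega) hba h₁⟩
  · exact mem_filter.2 ⟨mem_range.2 hc₂, div_ne_of_dvd_between (by omega) htℓ two_pos hab hba h₂⟩
  · rintro rfl
    have : t ∣ 1 := (Nat.dvd_add_right h₁).1 (by rwa [add_right_comm, add_assoc a 1 1])
    have := Nat.le_of_dvd one_pos this
    omega

end NatArith

section Arcs

variable {ℓ : ℕ} (t : ℕ)

def arcIndex (x : Fin ℓ) : ℕ := x.val / t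

def arcPartition (σ : Perm (Fin ℓ)) : Finset (Finset (Fin ℓ)) :=
  fiberPartition (arcIndex t ∘ σ)

variable {t}

theorem card_filter_arcIndex_eq {i : ℕ} (hi : i < ℓ / t) :
    (univ.filter fun x : Fin ℓ => arcIndex t x = i).card = t := by
  have ht : 0 < t := Nat.pos_of_ne_zero (by rintro rfl; simp at hi)
  have hle : (i + 1) * t ≤ ℓ := (Nat.le_div_iff_mul_le ht).1 hi
  have : (univ.filter fun x : Fin ℓ => arcIndex t x = i) =
      (Ico (i * t) (i * t + t)).attachFin fun m hm => by rw [mem_Ico] at hm; linarith := by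
    ext x
    simp only [arcIndex, mem_filter, mem_univ, true_and, mem_attachFin, mem_Ico,
      Nat.div_eq_iff ht]
    omega
  rw [this, card_attachFin, Nat.card_Ico, Nat.add_sub_cancel_left]

theorem image_arcIndex (ht : 0 < t) (htℓ : t ∣ ℓ) :
    univ.image (arcIndex t : Fin ℓ → ℕ) = range (ℓ / t) := by
  ext i
  simp only [mem_image, mem_univ, true_and, mem_range, arcIndex]
  constructor
  · rintro ⟨x, rfl⟩
    exact Nat.div_lt_div_of_lt_of_dvd htℓ x.isLt
  · intro hi
    have hle : (i + 1) * t ≤ ℓ := (Nat.le_div_iff_mul_le ht).1 hi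
    exact ⟨⟨i * t, by nlinarith⟩, Nat.mul_div_cancel i ht⟩

theorem card_filter_arcIndex_eq_arcIndex (htℓ : t ∣ ℓ) (x : Fin ℓ) :
    (univ.filter fun y : Fin ℓ => arcIndex t y = arcIndex t x).card = t :=
  card_filter_arcIndex_eq (Nat.div_lt_div_of_lt_of_dvd htℓ x.isLt)

theorem card_arcPartition (ht : 0 < t) (htℓ : t ∣ ℓ) (σ : Perm (Fin ℓ)) :
    (arcPartition t σ).card = ℓ / t := by
  rw [arcPartition, card_fiberPartition, ← image_image, image_univ_equiv, image_arcIndex ht htℓ,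
    card_range]

theorem card_of_mem_arcPartition (htℓ : t ∣ ℓ) {σ : Perm (Fin ℓ)} {b : Finset (Fin ℓ)}
    (hb : b ∈ arcPartition t σ) : b.card = t := by
  obtain ⟨x, -, rfl⟩ := mem_image.1 hb
  exact (card_equiv σ fun y => by simp).trans (card_filter_arcIndex_eq_arcIndex htℓ (σ x))

end Arcs

section Separators

variable {ℓ : ℕ} [NeZero ℓ] {t : ℕ}

theorem arcIndex_add_natCast (x : Fin ℓ) (c : ℕ) :
    arcIndex t (x + (c : Fin ℓ)) = (x.val + c) % ℓ / t := by
  rw [arcIndex, Fin.val_add, Fin.val_natCast, Nat.add_mod_mod]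

variable (t) in
def separators (x y : Fin ℓ) : Finset ℕ :=
  (range t).filter fun c => arcIndex t (x + (c : Fin ℓ)) ≠ arcIndex t (y + (c : Fin ℓ))

theorem separators_comm (x y : Fin ℓ) : separators t x y = separators t y x :=
  filter_congr fun _ _ => ne_comm

theorem mem_separators {x y : Fin ℓ} {c : ℕ} :
    c ∈ separators t x y ↔ c < t ∧ (x.val + c) % ℓ / t ≠ (y.val + c) % ℓ / t := by
  rw [separators, mem_filter, mem_range, arcIndex_add_natCast, arcIndex_add_natCast]

theorem mem_separators_self_add_one (htℓ : t ∣ ℓ) (h2t : 2 * t ≤ ℓ) {x : Fin ℓ} {c : ℕ} :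
    c ∈ separators t x (x + 1) ↔ c < t ∧ t ∣ x.val + 1 + c := by
  have hx1 : x + 1 + (c : Fin ℓ) = x + ((1 + c : ℕ) : Fin ℓ) := by push_cast; ring
  rw [separators, mem_filter, mem_range, hx1, arcIndex_add_natCast, arcIndex_add_natCast,
    mod_div_eq_div_mod htℓ, mod_div_eq_div_mod htℓ, ← add_assoc, add_right_comm, Nat.succ_div]
  rw [show x.val + c + 1 = x.val + 1 + c by ring]
  refine and_congr_right fun hc => ?_
  have hs : 2 ≤ ℓ / t := (Nat.le_div_iff_mul_le (by omega)).2 (by linarith)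
  split_ifs with hd
  · exact iff_of_true (mod_ne_mod_of_lt_of_lt (by omega) (by omega)) hd
  · exact iff_of_false (by simp) hd

theorem card_separators_self_add_one (ht : 0 < t) (htℓ : t ∣ ℓ) (h2t : 2 * t ≤ ℓ) (x : Fin ℓ) :
    (separators t x (x + 1)).card = 1 := by
  obtain ⟨c, hc, hdvd⟩ := exists_lt_dvd_add ht (x.val + 1)
  refine card_eq_one.2 ⟨c, eq_singleton_iff_unique_mem.2 ⟨?_, fun c' hc' => ?_⟩⟩
  · exact (mem_separators_self_add_one htℓ h2t).2 ⟨hc, hdvd⟩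
  · obtain ⟨hc't, hc'dvd⟩ := (mem_separators_self_add_one htℓ h2t).1 hc'
    exact eq_of_dvd_add_of_dvd_add hc't hc hc'dvd hdvd

theorem separators_eq_filter (x y : Fin ℓ) :
    separators t x y = (range t).filter fun c => (x.val + c) % ℓ / t ≠ (y.val + c) % ℓ / t := by
  ext c
  rw [mem_separators, mem_filter, mem_range]

theorem one_lt_card_separators (ht : 2 ≤ t) (htℓ : t ∣ ℓ) (h2t : 2 * t ≤ ℓ) {x y : Fin ℓ}
    (hxy : x ≠ y) (hy : y ≠ x + 1) (hx : x ≠ y + 1) : 1 < (separators t x y).card := by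
  wlog hlt : x.val < y.val generalizing x y
  · rw [separators_comm]
    exact this hxy.symm hx hy (by have := Fin.val_ne_of_ne hxy; omega)
  have hval : ∀ z : Fin ℓ, (z + 1).val = (z.val + 1) % ℓ := fun z => by
    rw [Fin.val_add, Fin.val_one', Nat.add_mod_mod]
  have hyℓ := y.isLt
  have hab : x.val + 2 ≤ y.val := by
    by_contra h
    exact hy (Fin.ext (by rw [hval, Nat.mod_eq_of_lt (by omega)]; omega))
  by_cases hba : y.val + t ≤ x.val + ℓ
  · rw [separators_eq_filter]
    exact one_lt_card_filter_div_ne ht htℓ hab hba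
  · -- the short way from `x` to `y` passes through `0`: compare `y` with `x + ℓ`
    have hba' : y.val + 2 ≤ x.val + ℓ := by
      by_contra h
      exact hx (Fin.ext (by rw [hval, show y.val + 1 = ℓ by omega, Nat.mod_self]; omega))
    rw [separators_comm, separators_eq_filter]
    convert one_lt_card_filter_div_ne ht htℓ hba' (by omega : x.val + ℓ + t ≤ y.val + ℓ) using 5
    rw [add_right_comm, Nat.add_mod_right]

theorem adjacent_of_card_separators_eq_one (ht : 2 ≤ t) (htℓ : t ∣ ℓ) (h2t : 2 * t ≤ ℓ)
    {x y : Fin ℓ} (h : (separators t x y).card = 1) : y = x + 1 ∨ x = y + 1 := by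
  by_contra! hne
  by_cases hxy : x = y
  · subst hxy
    simp [separators] at h
  · exact (one_lt_card_separators ht htℓ h2t hxy hne.1 hne.2).ne' h

theorem separators_apply {g : Fin ℓ → Fin ℓ}
    (hg : ∀ c < t, PreservesFibers g (arcIndex t ∘ Equiv.addRight (c : Fin ℓ))) (x y : Fin ℓ) :
    separators t (g x) (g y) = separators t x y :=
  filter_congr fun c hc => not_congr (hg c (mem_range.1 hc) x y)

end Separators

section Dihedral

variable {ℓ : ℕ} [NeZero ℓ]

theorem eq_add_or_eq_sub_of_adjacent (hℓ : 3 ≤ ℓ) {g : Fin ℓ → Fin ℓ} (hg : Function.Injective g)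
    (hadj : ∀ x, g (x + 1) = g x + 1 ∨ g x = g (x + 1) + 1) :
    (∀ x, g x = g 0 + x) ∨ (∀ x, g x = g 0 - x) := by
  have htwo : ∀ x : Fin ℓ, x + 1 + 1 ≠ x := fun x h => by
    have := congrArg Fin.val (show (1 + 1 : Fin ℓ) = 0 by linear_combination h)
    rw [Fin.val_add, Fin.val_one', Nat.mod_eq_of_lt (by omega : 1 < ℓ),
      Nat.mod_eq_of_lt (by omega : 2 < ℓ)] at this
    simp at this
  -- the step `g (x + 1) - g x = ±1` cannot change sign, else `g (x + 2) = g x`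
  have hstep : ∀ x, g (x + 1 + 1) - g (x + 1) = g (x + 1) - g x := fun x => by
    rcases hadj x with h | h <;> rcases hadj (x + 1) with h' | h'
    · linear_combination h' - h
    · exact absurd (hg (by linear_combination h - h')) (htwo x)
    · exact absurd (hg (by linear_combination h' - h)) (htwo x)
    · linear_combination h - h'
  have hconst : ∀ k : ℕ, g (k + 1) - g k = g 1 - g 0 := by
    intro k
    induction k with
    | zero => simp
    | succ k ih => rw [Nat.cast_succ, hstep, ih]
  have hlin : ∀ k : ℕ, g k = g 0 + k * (g 1 - g 0) := by
    intro k
    induction k with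
    | zero => simp
    | succ k ih => rw [Nat.cast_succ]; linear_combination hconst k + ih
  rcases hadj 0 with h | h <;> rw [zero_add] at h
  · left
    intro x
    rw [← Fin.cast_val_eq_self x, hlin, h]
    ring
  · right
    intro x
    rw [← Fin.cast_val_eq_self x, hlin, h]
    ring

end Dihedral

section Residues

variable {ℓ : ℕ} {t : ℕ}

theorem natCast_val_add (htℓ : t ∣ ℓ) (x y : Fin ℓ) :
    (((x + y).val : ℕ) : ZMod t) = x.val + y.val := by
  rw [Fin.val_add, ← Nat.cast_add, ZMod.natCast_eq_natCast_iff', Nat.mod_mod_of_dvd _ htℓ]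

variable [NeZero ℓ]

theorem natCast_val_sub (htℓ : t ∣ ℓ) (x y : Fin ℓ) :
    (((x - y).val : ℕ) : ZMod t) = x.val - y.val := by
  rw [eq_sub_iff_add_eq, ← natCast_val_add htℓ, sub_add_cancel]

theorem natCast_val_eq_of_separators_eq (ht : 0 < t) (htℓ : t ∣ ℓ) (h2t : 2 * t ≤ ℓ)
    {u v : Fin ℓ} (h : separators t u (u + 1) = separators t v (v + 1)) :
    (u.val : ZMod t) = v.val := by
  obtain ⟨c, hc, hu⟩ := exists_lt_dvd_add ht (u.val + 1)
  have hv := ((mem_separators_self_add_one htℓ h2t).1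
    (h ▸ (mem_separators_self_add_one htℓ h2t).2 ⟨hc, hu⟩)).2
  have hu' := (ZMod.natCast_eq_zero_iff _ t).2 hu
  have hv' := (ZMod.natCast_eq_zero_iff _ t).2 hv
  push_cast at hu' hv'
  linear_combination hu' - hv'

variable {g : Fin ℓ → Fin ℓ} {a : Fin ℓ}

theorem natCast_val_eq_zero_of_forall_eq_add (ht : 0 < t) (htℓ : t ∣ ℓ) (h2t : 2 * t ≤ ℓ)
    (hsep : ∀ x y, separators t (g x) (g y) = separators t x y) (hg : ∀ x, g x = a + x) :
    (a.val : ZMod t) = 0 := by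
  have h : separators t a (a + 1) = separators t 0 ((0 : Fin ℓ) + 1) := by
    rw [zero_add, ← hsep 0 1, hg, hg, add_zero]
  simpa using natCast_val_eq_of_separators_eq ht htℓ h2t h

theorem natCast_val_eq_one_of_forall_eq_sub (ht : 0 < t) (htℓ : t ∣ ℓ) (h2t : 2 * t ≤ ℓ)
    (hsep : ∀ x y, separators t (g x) (g y) = separators t x y) (hg : ∀ x, g x = a - x) :
    (a.val : ZMod t) = 1 ∧ (2 : ZMod t) = 0 := by
  have hone : (((1 : Fin ℓ).val : ℕ) : ZMod t) = 1 := by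
    rw [Fin.val_one', Nat.mod_eq_of_lt (by omega), Nat.cast_one]
  have key : ∀ x : Fin ℓ, (a.val : ZMod t) = 2 * x.val + 1 := by
    intro x
    have h := hsep x (x + 1)
    rw [show g x = a - x - 1 + 1 by rw [hg]; ring, show g (x + 1) = a - x - 1 by rw [hg]; ring,
      separators_comm] at h
    have := natCast_val_eq_of_separators_eq ht htℓ h2t h
    rw [natCast_val_sub htℓ, natCast_val_sub htℓ, hone] at this
    linear_combination this
  have h0 := key 0
  have h1 := key 1
  rw [Fin.val_zero, Nat.cast_zero, mul_zero, zero_add] at h0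
  rw [hone, h0] at h1
  exact ⟨h0, by linear_combination -h1⟩

end Residues

section Rigidity

variable {ℓ : ℕ} [NeZero ℓ] {t : ℕ}

theorem arcIndex_zero_ne_arcIndex_succ (ht : 2 ≤ t) (h2t : 2 * t ≤ ℓ) :
    arcIndex t (0 : Fin ℓ) ≠ arcIndex t ((t + 1 : ℕ) : Fin ℓ) := by
  rw [arcIndex, arcIndex, Fin.val_cast_of_lt (by omega), Fin.val_zero, Nat.zero_div,
    Nat.div_eq_of_lt_le (k := 1)] <;> omega

theorem eq_zero_of_isMeetSingleton_of_three_le (ht : 3 ≤ t) (htℓ : t ∣ ℓ) (h2t : 2 * t ≤ ℓ)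
    {a : Fin ℓ} (ha : IsMeetSingleton (arcIndex t) (arcIndex t ∘ swap 0 ((t + 1 : ℕ) : Fin ℓ)) a)
    (hres : (a.val : ZMod t) = 0) : a = 0 := by
  have hq := Fin.val_cast_of_lt (n := ℓ) (by omega : t + 1 < ℓ)
  refine (eq_or_eq_of_isMeetSingleton_swap_of_three_le
    (arcIndex_zero_ne_arcIndex_succ (by omega) h2t)
    (ht.trans (card_filter_arcIndex_eq_arcIndex htℓ a).ge) ha).resolve_right fun h => ?_
  rw [h, hq, ZMod.natCast_eq_zero_iff] at hres
  have := Nat.le_of_dvd one_pos ((Nat.dvd_add_right dvd_rfl).1 hres)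
  omega

theorem val_lt_four_of_isMeetSingleton (hℓ : 2 ∣ ℓ) (h6 : 6 ≤ ℓ) {a : Fin ℓ}
    (ha : IsMeetSingleton (arcIndex 2) (arcIndex 2 ∘ swap 0 ((3 : ℕ) : Fin ℓ)) a) : a.val < 4 := by
  have := apply_eq_or_apply_eq_of_isMeetSingleton_swap (card_filter_arcIndex_eq_arcIndex hℓ a).ge ha
  simp only [arcIndex, Fin.ext_iff, Fin.val_cast_of_lt (by omega : 3 < ℓ), Fin.val_zero] at this
  omega

theorem val_lt_two_of_isMeetSingleton (hℓ : 2 ∣ ℓ) (h6 : 6 ≤ ℓ) {a : Fin ℓ}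
    (h3 : IsMeetSingleton (arcIndex 2) (arcIndex 2 ∘ swap 0 ((3 : ℕ) : Fin ℓ)) a)
    (h5 : IsMeetSingleton (arcIndex 2) (arcIndex 2 ∘ swap 0 ((5 : ℕ) : Fin ℓ)) a) : a.val < 2 := by
  have := apply_eq_or_apply_eq_of_isMeetSingleton_swap (card_filter_arcIndex_eq_arcIndex hℓ a).ge h5
  simp only [arcIndex, Fin.ext_iff, Fin.val_cast_of_lt (by omega : 5 < ℓ), Fin.val_zero] at this
  have := val_lt_four_of_isMeetSingleton hℓ h6 h3
  omega

variable (t) in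
/-- For `t = 2` the reflection `x ↦ 3 - x` preserves the other three partitions, hence the
second exchange. -/
def basePerms : Finset (Perm (Fin ℓ)) :=
  (range t).image (fun c : ℕ => Equiv.addRight (c : Fin ℓ)) ∪
    insert (swap 0 ((t + 1 : ℕ) : Fin ℓ)) (if t = 2 then {swap 0 ((5 : ℕ) : Fin ℓ)} else ∅)

theorem card_basePerms_le :
    (basePerms t : Finset (Perm (Fin ℓ))).card ≤ t + if t = 2 then 2 else 1 := by
  refine (card_union_le _ _).trans (add_le_add (card_image_le.trans (card_range t).le) ?_)
  refine (card_insert_le _ _).trans ?_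
  split_ifs <;> simp

theorem not_forall_eq_sub (ht : 2 ≤ t) (htℓ : t ∣ ℓ) (h2t : 2 * t ≤ ℓ) (h5 : 5 ≤ ℓ)
    {g : Fin ℓ → Fin ℓ} (hsep : ∀ x y, separators t (g x) (g y) = separators t x y)
    (hQ : ∀ x, IsMeetSingleton (arcIndex t) (arcIndex t ∘ swap 0 ((t + 1 : ℕ) : Fin ℓ)) x →
      IsMeetSingleton (arcIndex t) (arcIndex t ∘ swap 0 ((t + 1 : ℕ) : Fin ℓ)) (g x))
    (hg0 : t = 2 → (g 0).val < 2) : ¬∀ x, g x = g 0 - x := by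
  intro hrefl
  obtain ⟨hodd, htwo⟩ := natCast_val_eq_one_of_forall_eq_sub (by omega) htℓ h2t hsep hrefl
  have ht2 : t = 2 := by
    have := Nat.le_of_dvd two_pos ((ZMod.natCast_eq_zero_iff 2 t).1 (by exact_mod_cast htwo))
    omega
  subst ht2
  have hg0' : (g 0).val = 1 := by
    have := hg0 rfl
    rw [← Nat.cast_one, ZMod.natCast_eq_natCast_iff'] at hodd
    omega
  have h3 := val_lt_four_of_isMeetSingleton htℓ (by omega)
    (hQ _ (isMeetSingleton_swap_right (arcIndex_zero_ne_arcIndex_succ ht h2t)))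
  rw [hrefl, Fin.val_sub, hg0', Fin.val_cast_of_lt (by omega), Nat.mod_eq_of_lt (by omega)] at h3
  omega

theorem eq_one_of_preservesFibers (ht : 2 ≤ t) (htℓ : t ∣ ℓ) (h2t : 2 * t ≤ ℓ) (h5 : 5 ≤ ℓ)
    {g : Perm (Fin ℓ)} (hg : ∀ σ ∈ basePerms t, PreservesFibers g (arcIndex t ∘ σ)) : g = 1 := by
  have hshift : ∀ c < t, PreservesFibers g (arcIndex t ∘ Equiv.addRight (c : Fin ℓ)) :=
    fun c hc => hg _ (mem_union_left _ (mem_image_of_mem _ (mem_range.2 hc)))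
  have hrow : PreservesFibers g (arcIndex t) := by simpa using hshift 0 (by omega)
  have hsep := separators_apply hshift
  have hadj : ∀ x, g (x + 1) = g x + 1 ∨ g x = g (x + 1) + 1 := fun x =>
    adjacent_of_card_separators_eq_one ht htℓ h2t
      (by rw [hsep, card_separators_self_add_one (by omega) htℓ h2t])
  have hQ := fun x => hrow.isMeetSingleton (x := x)
    (hg _ (mem_union_right _ (mem_insert_self _ _))) g.surjective
  have h0 := hQ 0 (isMeetSingleton_swap (arcIndex_zero_ne_arcIndex_succ ht h2t))
  have hg0 : t = 2 → (g 0).val < 2 := by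
    rintro rfl
    have hQ' := hrow.isMeetSingleton (x := 0) (hg (swap 0 ((5 : ℕ) : Fin ℓ))
      (mem_union_right _ (mem_insert_of_mem (by simp)))) g.surjective
    refine val_lt_two_of_isMeetSingleton htℓ (by omega) h0 (hQ' (isMeetSingleton_swap ?_))
    rw [arcIndex, arcIndex, Fin.val_cast_of_lt (by omega)]
    simp
  have hrot := (eq_add_or_eq_sub_of_adjacent (by omega) g.injective hadj).resolve_right
    (not_forall_eq_sub ht htℓ h2t h5 hsep hQ hg0)
  have hres := natCast_val_eq_zero_of_forall_eq_add (by omega) htℓ h2t hsep hrot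
  suffices g 0 = 0 from Equiv.ext fun x => by rw [hrot, this, zero_add]; rfl
  rcases (by omega : 3 ≤ t ∨ t = 2) with ht3 | rfl
  · exact eq_zero_of_isMeetSingleton_of_three_le ht3 htℓ h2t h0 hres
  · rw [ZMod.natCast_eq_zero_iff] at hres
    have := hg0 rfl
    exact Fin.ext (by simp only [Fin.val_zero]; omega)

end Rigidity

section Counting

open Nat

theorem factorial_mul_eq_prod_choose (s u : ℕ) :
    (s * (u + 1))! = (u + 1)! ^ s * s ! * ∏ i ∈ range s, (i * (u + 1) + u).choose u := by
  induction s with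
  | zero => simp
  | succ s ih =>
    have hc := Nat.choose_mul_factorial_mul_factorial (Nat.le_add_left u (s * (u + 1)))
    rw [Nat.add_sub_cancel] at hc
    rw [show (s + 1) * (u + 1) = s * (u + 1) + u + 1 by ring, Nat.factorial_succ, ← hc, ih,
      prod_range_succ, Nat.factorial_succ u, Nat.factorial_succ s]
    ring

theorem factorial_div_eq_prod_choose (s u : ℕ) :
    (s * (u + 1))! / ((u + 1)! ^ s * s !) = ∏ i ∈ range s, (i * (u + 1) + u).choose u := by
  rw [factorial_mul_eq_prod_choose, Nat.mul_div_cancel_left _ (by positivity)]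

theorem two_pow_lt_choose {u : ℕ} (hu : 2 ≤ u) : 2 ^ (u + 1) < (2 * u + 1).choose u := by
  induction u, hu using Nat.le_induction with
  | base => decide
  | succ u hu ih =>
    have h1 : (2 * u + 1).choose u ≤ (2 * u + 2).choose u := Nat.choose_le_choose _ (by omega)
    have h2 : (2 * u + 1).choose u ≤ (2 * u + 2).choose (u + 1) := by
      rw [← Nat.choose_symm_half]
      exact Nat.choose_le_choose _ (by omega)
    rw [show 2 * (u + 1) + 1 = 2 * u + 2 + 1 by ring, Nat.choose_succ_succ', pow_succ]
    omega

theorem choose_le_prod_choose {s : ℕ} (hs : 2 ≤ s) (u : ℕ) :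
    (2 * u + 1).choose u ≤ ∏ i ∈ range s, (i * (u + 1) + u).choose u := by
  have := single_le_prod' (f := fun i => (i * (u + 1) + u).choose u)
    (fun i _ => Nat.choose_pos (Nat.le_add_left u _)) (mem_range.2 (by omega : 1 < s))
  rwa [show 1 * (u + 1) + u = 2 * u + 1 by ring] at this

theorem fifteen_le_prod_choose {s : ℕ} (hs : 3 ≤ s) :
    15 ≤ ∏ i ∈ range s, (i * (1 + 1) + 1).choose 1 :=
  calc 15 = ∏ i ∈ range 3, (i * (1 + 1) + 1).choose 1 := by simp [prod_range_succ]
    _ ≤ _ := prod_le_prod_of_subset_of_one_le' (range_mono hs) fun i _ _ => by simp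

theorem natCast_lt_logb_two_add_one {m k n : ℕ} (hm : m ≤ k + 1) (hn : 2 ^ k < n) :
    (m : ℝ) < Real.logb 2 n + 1 := by
  have hk : (k : ℝ) < Real.logb 2 n := by
    rw [Real.lt_logb_iff_rpow_lt one_lt_two (by exact_mod_cast (Nat.zero_lt_of_lt hn)),
      Real.rpow_natCast]
    exact_mod_cast hn
  have : (m : ℝ) ≤ k + 1 := by exact_mod_cast hm
  linarith

theorem natCast_lt_logb_factorial_div_add_one {s t m : ℕ} (hs : 2 ≤ s) (ht : 2 ≤ t)
    (h5 : 5 ≤ s * t) (hm : m ≤ t + if t = 2 then 2 else 1) :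
    (m : ℝ) < Real.logb 2 ((s * t)! / (t ! ^ s * s !) : ℕ) + 1 := by
  obtain ⟨u, rfl⟩ : ∃ u, t = u + 1 := ⟨t - 1, by omega⟩
  rw [factorial_div_eq_prod_choose]
  rcases (by omega : u = 1 ∨ 2 ≤ u) with rfl | hu
  · refine natCast_lt_logb_two_add_one (k := 3) (by simpa using hm) ?_
    exact (by norm_num : 2 ^ 3 < 15).trans_le (fifteen_le_prod_choose (by omega))
  · refine natCast_lt_logb_two_add_one (k := u + 1) (by simpa [show u + 1 ≠ 2 by omega] using hm) ?_
    exact (two_pow_lt_choose hu).trans_le (choose_le_prod_choose hs u)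

end Counting

end ArcPartitionBase

open ArcPartitionBase Finset in
/-- Let `s, t ≥ 2` with `ℓ = s·t ≥ 5`, and let `Sym(ℓ)` act on the set of partitions
of `{1,…,ℓ}` into `s` blocks of size `t`, of which there are
`n = ℓ! / ((t!)^s · s!)`. Then the minimal base size is less than `log₂ n + 1`,
i.e. there is a base (a set of such partitions with trivial pointwise stabilizer in
`Sym(ℓ)`) of size less than `log₂ n + 1`. -/
theorem stmt9 (s t ℓ : ℕ) (hs : 2 ≤ s) (ht : 2 ≤ t) (hℓ : ℓ = s * t) (h5 : 5 ≤ ℓ)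
    (n : ℕ) (hn : n = ℓ.factorial / (t.factorial ^ s * s.factorial)) :
    ∃ Bse : Finset (Finset (Finset (Fin ℓ))),
      (∀ P ∈ Bse, P.card = s ∧ (∀ b ∈ P, b.card = t) ∧
        ∀ x : Fin ℓ, ∃! b : Finset (Fin ℓ), b ∈ P ∧ x ∈ b) ∧
      (∀ g : Equiv.Perm (Fin ℓ),
        (∀ P ∈ Bse, Finset.image (fun b => Finset.image (⇑g) b) P = P) → g = 1) ∧
      (Bse.card : ℝ) < Real.logb 2 (n : ℝ) + 1 := by
  have : NeZero ℓ := ⟨by omega⟩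
  have htℓ : t ∣ ℓ := hℓ ▸ dvd_mul_left t s
  have h2t : 2 * t ≤ ℓ := hℓ ▸ Nat.mul_le_mul_right t hs
  refine ⟨(basePerms t).image (arcPartition t), ?_, fun g hg => ?_, ?_⟩
  · intro P hP
    obtain ⟨σ, -, rfl⟩ := mem_image.1 hP
    refine ⟨?_, fun b => card_of_mem_arcPartition htℓ, existsUnique_mem_fiberPartition _⟩
    rw [card_arcPartition (by omega) htℓ, hℓ, Nat.mul_div_cancel s (by omega)]
  · exact eq_one_of_preservesFibers ht htℓ h2t h5 fun σ hσ =>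
      preservesFibers_of_image_fiberPartition g.injective (hg _ (mem_image_of_mem _ hσ))
  · have := natCast_lt_logb_factorial_div_add_one hs ht (hℓ ▸ h5)
      ((card_image_le (s := basePerms (ℓ := ℓ) t) (f := arcPartition t)).trans card_basePerms_le)
    rwa [← hℓ, ← hn] at this
end

section
/- Let d ≥ 8 be even, q a prime power, 1 ≤ k ≤ d/2 − 1, and ε ∈ {+1,−1}. Then the number n of totally singular k-spaces for O^ε_d(q), given by n = (q^{d/2}−ε)(q^{d/2−k}+ε)·∏_{i=d/2−k+1}^{d/2−1}(q^{2i}−1) / ∏_{i=1}^{k}(q^i−1), satisfies n > q^{d−2+k(k−1)/2}. -/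
open Finset

private lemma gauss13 (m : ℕ) : 2 * (∑ i ∈ Finset.Icc 2 (m+1), i) + 2 = (m+1)*(m+2) := by
  induction m with
  | zero => decide
  | succ n ih =>
    have h : Finset.Icc 2 (n+1+1) = insert (n+2) (Finset.Icc 2 (n+1)) := by
      ext x; simp only [Finset.mem_Icc, Finset.mem_insert]; omega
    rw [h, Finset.sum_insert (by simp)]
    calc 2*((n+2) + ∑ i ∈ Finset.Icc 2 (n+1), i) + 2
        = (2 * (∑ i ∈ Finset.Icc 2 (n+1), i) + 2) + 2*(n+2) := by ring
      _ = (n+1)*(n+2) + 2*(n+2) := by rw [ih]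
      _ = (n+1+1)*(n+1+2) := by ring

private lemma aux13 (Q : ℤ) (hQ2 : 2 ≤ Q) (a b k : ℕ) (hk1 : 1 ≤ k)
    (hab : a = b + k + 1) (ha4 : 4 ≤ a) (ε : ℤ) (hε : ε = 1 ∨ ε = -1) :
    (Q ^ (2*a - 2 + k * (k - 1) / 2) + 1) * ∏ i ∈ Finset.Icc 1 k, (Q ^ i - 1) ≤
      (Q ^ a - ε) * (Q ^ (a - k) + ε) *
        ∏ i ∈ Finset.Icc (a - k + 1) (a - 1), (Q ^ (2 * i) - 1) := by
  have hQ1 : (1:ℤ) ≤ Q := by linarith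
  have hmono : ∀ {i j : ℕ}, i ≤ j → Q^i ≤ Q^j := fun h => pow_le_pow_right₀ hQ1 h
  have hone : ∀ (i : ℕ), (1:ℤ) ≤ Q^i := fun i => one_le_pow₀ hQ1
  -- notation
  set S : ℕ := ∑ i ∈ Finset.Icc 2 k, i with hS
  set E0 : ℕ := k + 2*b + 1 with hE0
  set E1 : ℕ := S + (k-1)*(2*b) with hE1
  set t : ℕ := 2*a - 2 + k * (k - 1) / 2 with ht
  set B2 : ℤ := ∏ i ∈ Finset.Icc 2 k, (Q ^ i - 1) with hB2
  set P : ℤ := ∏ i ∈ Finset.Icc (a - k + 1) (a - 1), (Q ^ (2 * i) - 1) with hP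
  -- split of denominator
  have hsplit : (∏ i ∈ Finset.Icc 1 k, (Q ^ i - 1)) = (Q - 1) * B2 := by
    have h : Finset.Icc 1 k = insert 1 (Finset.Icc 2 k) := by
      ext x; simp only [Finset.mem_Icc, Finset.mem_insert]; omega
    rw [h, Finset.prod_insert (by simp), pow_one]
  have hB2pos : (0:ℤ) < B2 := by
    apply Finset.prod_pos
    intro i hi
    simp only [Finset.mem_Icc] at hi
    have := hmono (show 1 ≤ i by omega)
    rw [pow_one] at this; linarith
  -- bound on P
  have hPbound : B2 * Q^E1 ≤ P := by
    have hidx : Finset.Icc (a - k + 1) (a - 1) = Finset.Icc (2+b) (k+b) := by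
      congr 1 <;> omega
    rw [hP, hidx, ← Finset.map_add_right_Icc, Finset.prod_map]
    simp only [addRightEmbedding_apply]
    have hsum : (∑ j ∈ Finset.Icc 2 k, (j + 2*b)) = E1 := by
      rw [Finset.sum_add_distrib, Finset.sum_const, Nat.card_Icc, smul_eq_mul, hE1, hS,
        show k + 1 - 2 = k - 1 by omega]
    have : B2 * Q^E1 = ∏ j ∈ Finset.Icc 2 k, ((Q^j - 1) * Q^(j + 2*b)) := by
      rw [Finset.prod_mul_distrib, Finset.prod_pow_eq_pow_sum, hsum, hB2]
    rw [this]
    apply Finset.prod_le_prod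
    · intro j hj
      simp only [Finset.mem_Icc] at hj
      have h1 : (0:ℤ) ≤ Q^j - 1 := by linarith [hone j]
      positivity
    · intro j hj
      have h2 : Q^(2*(j+b)) = Q^j * Q^(j + 2*b) := by
        rw [← pow_add]; congr 1; ring
      rw [h2, sub_one_mul]
      linarith [hone (j + 2*b)]
  -- bound on epsilon pair
  have hak : a - k = b + 1 := by omega
  have e1 : Q^a * Q^(b+1) = Q * Q^E0 := by
    rw [← pow_add, ← pow_succ']; congr 1; omega
  have hF0 : (Q - 1) * (Q^E0 + 1) ≤ (Q ^ a - ε) * (Q ^ (a - k) + ε) := by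
    rw [hak]
    have hQb1 : Q ≤ Q^(b+1) := by
      have := hmono (show 1 ≤ b+1 by omega); rwa [pow_one] at this
    rcases hε with rfl | rfl
    · have e2 : Q^(b+2) ≤ Q^a := hmono (by omega)
      have e3 : Q^(b+2) = Q * Q^(b+1) := by rw [pow_succ']
      have key : Q + Q^(b+1) ≤ Q^a + Q^E0 := by
        nlinarith [hone E0, hone (b+1)]
      linarith [e1, key]
    · have key : Q + Q^a ≤ Q^(b+1) + Q^E0 := by
        rcases Nat.eq_zero_or_pos b with hb | hb
        · subst hb
          have hEa : E0 = a := by omega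
          rw [hEa]; simp
        · have e4 : Q^(a+1) ≤ Q^E0 := hmono (by omega)
          have e5 : Q^(a+1) = Q * Q^a := by rw [pow_succ']
          have hQa : Q ≤ Q^a := by
            have := hmono (show 1 ≤ a by omega); rwa [pow_one] at this
          nlinarith [hone (b+1)]
      linarith [e1, key]
  -- exponent inequality
  have hexp : t ≤ E0 + E1 := by
    obtain ⟨m, rfl⟩ : ∃ m, k = m + 1 := ⟨k-1, by omega⟩
    have hgauss := gauss13 m
    rw [ht, hE0, hE1, hS]
    simp only [Nat.add_sub_cancel]
    have h1 : 2 * (∑ i ∈ Finset.Icc 2 (m+1), i) + 2 = (m+1)*m + 2*(m+1) := by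
      rw [hgauss]; ring
    generalize hKK : (m+1)*m = K at h1 ⊢
    generalize hMM : m*(2*b) = M
    omega
  -- combine
  have hF0nn : (0:ℤ) ≤ (Q ^ a - ε) * (Q ^ (a - k) + ε) := by
    have : (0:ℤ) ≤ (Q - 1) * (Q^E0 + 1) := by
      have := hone E0; nlinarith
    linarith [hF0]
  have hB2E : (0:ℤ) ≤ B2 * Q^E1 := by positivity
  have step1 : (Q - 1) * (Q^E0 + 1) * (B2 * Q^E1) ≤
      (Q ^ a - ε) * (Q ^ (a - k) + ε) * P :=
    mul_le_mul hF0 hPbound hB2E hF0nn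
  rw [hsplit]
  calc (Q ^ t + 1) * ((Q - 1) * B2) = ((Q - 1) * B2) * (Q ^ t + 1) := by ring
    _ ≤ ((Q - 1) * B2) * (Q^(E0+E1) + Q^E1) := by
        apply mul_le_mul_of_nonneg_left _ (by nlinarith [hB2pos])
        have h1 := hmono hexp
        have h2 := hone E1
        linarith
    _ = (Q - 1) * (Q^E0 + 1) * (B2 * Q^E1) := by rw [pow_add]; ring
    _ ≤ _ := step1

/-- Let `d = 2a ≥ 8`, `q` a prime power, `1 ≤ k ≤ d/2 − 1` and `ε = ±1`. The number
of totally singular `k`-spaces for `O^ε_d(q)`,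
`n = (q^{d/2}−ε)(q^{d/2−k}+ε)·∏_{i=d/2−k+1}^{d/2−1}(q^{2i}−1) / ∏_{i=1}^{k}(q^i−1)`,
satisfies `n > q^{d−2+k(k−1)/2}`. -/
theorem stmt13 (q p f d a k : ℕ) (hp : p.Prime) (hq : q = p ^ f) (hf : 1 ≤ f)
    (hd : d = 2 * a) (hd8 : 8 ≤ d) (hk1 : 1 ≤ k) (hk : k ≤ a - 1)
    (ε : ℤ) (hε : ε = 1 ∨ ε = -1) (n : ℤ)
    (hn : n = (((q : ℤ) ^ a - ε) * ((q : ℤ) ^ (a - k) + ε) *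
        ∏ i ∈ Finset.Icc (a - k + 1) (a - 1), ((q : ℤ) ^ (2 * i) - 1)) /
        ∏ i ∈ Finset.Icc 1 k, ((q : ℤ) ^ i - 1)) :
    (q : ℤ) ^ (d - 2 + k * (k - 1) / 2) < n := by
  subst hd
  have hq2 : 2 ≤ q := by
    calc 2 ≤ p := hp.two_le
    _ ≤ p ^ f := Nat.le_self_pow (by omega) p
    _ = q := hq.symm
  have hQ2 : (2:ℤ) ≤ (q:ℤ) := by exact_mod_cast hq2
  have hQ1 : (1:ℤ) ≤ (q:ℤ) := by linarith
  have ha4 : 4 ≤ a := by omega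
  obtain ⟨b, hab⟩ : ∃ b, a = b + k + 1 := ⟨a - k - 1, by omega⟩
  have hBpos : (0:ℤ) < ∏ i ∈ Finset.Icc 1 k, ((q:ℤ) ^ i - 1) := by
    apply Finset.prod_pos
    intro i hi
    simp only [Finset.mem_Icc] at hi
    have := pow_le_pow_right₀ hQ1 (show 1 ≤ i by omega)
    rw [pow_one] at this; linarith
  have hmain := aux13 (q:ℤ) hQ2 a b k hk1 hab ha4 ε hε
  have hexp' : 2*a - 2 + k * (k-1)/2 = 2*a - 2 + k * (k - 1) / 2 := rfl
  have h2 : (q:ℤ) ^ (2*a - 2 + k * (k - 1) / 2) + 1 ≤ n := by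
    rw [hn]
    exact (Int.le_ediv_iff_mul_le hBpos).mpr hmain
  linarith
end

section
/- Let d ≥ 6, q a prime power, and d/2 ≥ k ≥ 3. Then the Gaussian binomial coefficient [d choose k]_q = ∏_{i=0}^{k−1} (q^{d−i}−1)/(q^{k−i}−1), counting k-dimensional subspaces of F_q^d, exceeds q^{d+3}. -/
lemma stmt15_aux (q a b : ℕ) (hq : 2 ≤ q) (hb : 1 ≤ b) (hab : b < a) :
    (q:ℚ)^(a-b) < ((q:ℚ)^a - 1)/((q:ℚ)^b - 1) := by
  have hq1 : (1:ℚ) < (q:ℚ) := by exact_mod_cast hq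
  have h1 : (1:ℚ) < (q:ℚ)^b := one_lt_pow₀ hq1 (by omega)
  rw [lt_div_iff₀ (by linarith)]
  have hmul : (q:ℚ)^(a-b) * (q:ℚ)^b = (q:ℚ)^a := by
    rw [← pow_add]; congr 1; omega
  have h2 : (1:ℚ) < (q:ℚ)^(a-b) := one_lt_pow₀ hq1 (by omega)
  nlinarith

/-- For `d ≥ 6`, `q` a prime power and `3 ≤ k ≤ d/2`, the Gaussian binomial
coefficient `[d choose k]_q = ∏_{i=0}^{k−1} (q^{d−i}−1)/(q^{k−i}−1)`, which counts
the `k`-dimensional subspaces of `F_q^d`, exceeds `q^{d+3}`. -/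
theorem stmt15 (q p f d k : ℕ) (hp : p.Prime) (hq : q = p ^ f) (hf : 1 ≤ f)
    (hd : 6 ≤ d) (hk3 : 3 ≤ k) (hk : 2 * k ≤ d) :
    (q : ℚ) ^ (d + 3) <
      ∏ i ∈ Finset.range k, ((q : ℚ) ^ (d - i) - 1) / ((q : ℚ) ^ (k - i) - 1) := by
  have hq2 : 2 ≤ q := by
    have h1 : p ≤ p ^ f := Nat.le_self_pow (by omega) p
    have := hp.two_le
    omega
  have hq1 : (1:ℚ) ≤ (q:ℚ) := by exact_mod_cast (by omega : 1 ≤ q)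
  have hexp : d + 3 ≤ k * (d - k) := by
    obtain ⟨m, hm⟩ : ∃ m, d = k + m := ⟨d - k, by omega⟩
    subst hm
    have : k + m + 3 ≤ k * m := by nlinarith
    simpa using this
  calc (q:ℚ)^(d+3) ≤ (q:ℚ)^(k*(d-k)) := pow_le_pow_right₀ hq1 hexp
    _ = ∏ _i ∈ Finset.range k, (q:ℚ)^(d-k) := by
        rw [Finset.prod_const, Finset.card_range, ← pow_mul, mul_comm]
    _ < _ := by
        apply Finset.prod_lt_prod_of_nonempty
        · intro i _
          positivity
        · intro i hi
          rw [Finset.mem_range] at hi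
          have := stmt15_aux q (d-i) (k-i) hq2 (by omega) (by omega)
          have he : d - i - (k - i) = d - k := by omega
          rwa [he] at this
        · exact ⟨0, by simp; omega⟩
end
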